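/- arXiv:2202.08427 — 10 statements merged into one kernel-verified Lean document; each statement's English description precedes it below -/
import Mathlib

section
/- Every digraph D admits a weak-odd 3-edge coloring, i.e., there is a map φ : A(D) → {1,2,3} such that for every vertex v, each nonempty semi-cut ∂⁺(v) and ∂⁻(v) contains some color appearing an odd number of times. -/
open Finset
open scoped Classical

namespace WeakOdd

variable {V : Type*} [Fintype V] [DecidableEq V]

/-- The out semi-cut of `v`: arcs leaving `v`. -/
def outCut (A : Finset (V × V)) (v : V) : Finset (V × V) :=
  A.filter fun e => e.1 = v

/-- The in semi-cut of `v`: arcs entering `v`. -/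
def inCut (A : Finset (V × V)) (v : V) : Finset (V × V) :=
  A.filter fun e => e.2 = v

/-- The weak-odd condition holds at `v` for the arc coloring `φ`. -/
def SatAt (A : Finset (V × V)) (φ : V × V → ℕ) (v : V) : Prop :=
  ((outCut A v).Nonempty → ∃ i, Odd ((outCut A v).filter fun e => φ e = i).card) ∧
  ((inCut A v).Nonempty → ∃ i, Odd ((inCut A v).filter fun e => φ e = i).card)

/-- `φ` is a weak-odd `k`-edge coloring of the digraph with arc set `A`. -/
def IsWOColoring (A : Finset (V × V)) (k : ℕ) (φ : V × V → ℕ) : Prop :=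
  (∀ e ∈ A, φ e < k) ∧ ∀ v, SatAt A φ v

/-- The weak-odd chromatic index. -/
noncomputable def woIndex (A : Finset (V × V)) : ℕ :=
  sInf {k | ∃ φ : V × V → ℕ, IsWOColoring A k φ}

/-- The defect: minimum number of failing vertices over all 2-arc-colorings. -/
noncomputable def defect (A : Finset (V × V)) : ℕ :=
  sInf {m | ∃ φ : V × V → ℕ, (∀ e ∈ A, φ e < 2) ∧
    (Finset.univ.filter fun v => ¬ SatAt A φ v).card = m}

def IsTournament (A : Finset (V × V)) : Prop :=
  (∀ v, (v, v) ∉ A) ∧ ∀ u v : V, u ≠ v → ((u, v) ∈ A ↔ (v, u) ∉ A)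

def IsSemicomplete (A : Finset (V × V)) : Prop :=
  (∀ v, (v, v) ∉ A) ∧ ∀ u v : V, u ≠ v → (u, v) ∈ A ∨ (v, u) ∈ A

/-- A vertex is peripheral if some semi-cut is empty. -/
def Peripheral (A : Finset (V × V)) (v : V) : Prop :=
  outCut A v = ∅ ∨ inCut A v = ∅

/-- The blow-up of a digraph: each vertex `w` is replaced by an independent set of
size `s w`, with all arcs between the sets oriented as in `A`. -/
def blowup {W : Type*} [Fintype W] [DecidableEq W] (A : Finset (W × W)) (s : W → ℕ) :
    Finset ((Σ w, Fin (s w)) × (Σ w, Fin (s w))) :=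
  Finset.univ.filter fun e => (e.1.1, e.2.1) ∈ A

end WeakOdd

open WeakOdd

section Aux


variable {V : Type*} [DecidableEq V]

/-- Incidence of a bipartite vertex (tail copy / head copy) with an arc. -/
def winc (x : V ⊕ V) (e : V × V) : Prop :=
  Sum.elim (fun v => e.1 = v) (fun v => e.2 = v) x

noncomputable def wcut (A : Finset (V × V)) (x : V ⊕ V) : Finset (V × V) :=
  A.filter (winc x)

lemma winc_iff (e0 : V × V) (x : V ⊕ V) :
    winc x e0 ↔ x = Sum.inl e0.1 ∨ x = Sum.inr e0.2 := by
  cases x <;> simp [winc, eq_comm]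

lemma notGood_eq (c : ℕ → ℕ) {j j' : ℕ}
    (hj : ∀ i, ¬ Odd (c i + if j = i then 1 else 0))
    (hj' : ∀ i, ¬ Odd (c i + if j' = i then 1 else 0)) : j = j' := by
  by_contra hne
  have h1 := hj j
  rw [if_pos rfl] at h1
  have h2 := hj' j
  rw [if_neg (fun h => hne h.symm)] at h2
  simp [Nat.not_odd_iff_even, Nat.even_add_one, Nat.not_even_iff_odd] at h1 h2
  exact (Nat.not_odd_iff_even.mpr h2) h1

lemma exists_good (c d : ℕ → ℕ) :
    ∃ j < 3, (∃ i, Odd (c i + if j = i then 1 else 0)) ∧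
      (∃ i, Odd (d i + if j = i then 1 else 0)) := by
  by_contra h
  push_neg at h
  have key : ∀ j, j < 3 → (∀ i, ¬ Odd (c i + if j = i then 1 else 0)) ∨
      (∀ i, ¬ Odd (d i + if j = i then 1 else 0)) := by
    intro j hj
    rcases Classical.em (∃ i, Odd (c i + if j = i then 1 else 0)) with hc | hc
    · exact Or.inr (h j hj hc)
    · push_neg at hc
      exact Or.inl hc
  have h0 := key 0 (by norm_num)
  have h1 := key 1 (by norm_num)
  have h2 := key 2 (by norm_num)
  rcases h0 with h0 | h0 <;> rcases h1 with h1 | h1 <;> rcases h2 with h2 | h2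
  · exact absurd (notGood_eq c h0 h1) (by norm_num)
  · exact absurd (notGood_eq c h0 h1) (by norm_num)
  · exact absurd (notGood_eq c h0 h2) (by norm_num)
  · exact absurd (notGood_eq d h1 h2) (by norm_num)
  · exact absurd (notGood_eq c h1 h2) (by norm_num)
  · exact absurd (notGood_eq d h0 h2) (by norm_num)
  · exact absurd (notGood_eq d h0 h1) (by norm_num)
  · exact absurd (notGood_eq d h0 h1) (by norm_num)

lemma wmain : ∀ (n : ℕ) (A : Finset (V × V)) (T : Finset (V ⊕ V)), T.card ≤ n →
    (∀ x ∈ T, (wcut A x).Nonempty) →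
    ∃ φ : V × V → ℕ, (∀ e ∈ A, φ e < 3) ∧
      ∀ x ∈ T, ∃ i, Odd (((wcut A x).filter fun e => φ e = i).card) := by
  intro n
  induction n with
  | zero =>
    intro A T hT _
    have hTe : T = ∅ := Finset.card_eq_zero.mp (Nat.le_zero.mp hT)
    subst hTe
    exact ⟨fun _ => 0, fun e _ => by norm_num, by simp⟩
  | succ n ih =>
    intro A T hcard hne
    rcases T.eq_empty_or_nonempty with rfl | ⟨u, hu⟩
    · exact ⟨fun _ => 0, fun e _ => by norm_num, by simp⟩
    obtain ⟨e0, he0⟩ := hne u hu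
    rw [wcut, Finset.mem_filter] at he0
    obtain ⟨he0A, hinc⟩ := he0
    have hux : u = Sum.inl e0.1 ∨ u = Sum.inr e0.2 := (winc_iff e0 u).mp hinc
    set x1 : V ⊕ V := Sum.inl e0.1 with hx1
    set x2 : V ⊕ V := Sum.inr e0.2 with hx2
    set A' := A.erase e0 with hA'
    set T' := (T.erase x1).erase x2 with hT'
    have hsub : T' ⊆ T.erase u := by
      intro x hx
      simp only [hT', Finset.mem_erase] at hx ⊢
      rcases hux with rfl | rfl
      · exact ⟨hx.2.1, hx.2.2⟩
      · exact ⟨hx.1, hx.2.2⟩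
    have hT'card : T'.card ≤ n := by
      have h1 := Finset.card_le_card hsub
      have h2 : (T.erase u).card < T.card := Finset.card_erase_lt_of_mem hu
      omega
    have hcuteq : ∀ x : V ⊕ V, x ≠ x1 → x ≠ x2 → wcut A' x = wcut A x := by
      intro x h1 h2
      ext e
      simp only [wcut, hA', Finset.mem_filter, Finset.mem_erase]
      constructor
      · rintro ⟨⟨hne', heA⟩, hi⟩; exact ⟨heA, hi⟩
      · rintro ⟨heA, hi⟩
        refine ⟨⟨?_, heA⟩, hi⟩
        rintro rfl
        rcases (winc_iff e x).mp hi with rfl | rfl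
        · exact h1 rfl
        · exact h2 rfl
    have hT'ne : ∀ x ∈ T', (wcut A' x).Nonempty := by
      intro x hx
      simp only [hT', Finset.mem_erase] at hx
      rw [hcuteq x hx.2.1 hx.1]
      exact hne x hx.2.2
    obtain ⟨φ', hb', hg'⟩ := ih A' T' hT'card hT'ne
    obtain ⟨j, hj3, hgood1, hgood2⟩ :=
      exists_good (fun i => ((wcut A' x1).filter fun e => φ' e = i).card)
        (fun i => ((wcut A' x2).filter fun e => φ' e = i).card)
    refine ⟨Function.update φ' e0 j, ?_, ?_⟩
    · intro e he
      rcases eq_or_ne e e0 with rfl | hne'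
      · simpa using hj3
      · rw [Function.update_of_ne hne']
        exact hb' e (Finset.mem_erase.mpr ⟨hne', he⟩)
    · have hfc : ∀ (y : V ⊕ V) (i : ℕ),
          ((wcut A' y).filter fun e => Function.update φ' e0 j e = i)
            = (wcut A' y).filter fun e => φ' e = i := by
        intro y i
        apply Finset.filter_congr
        intro e he
        have hee : e ≠ e0 :=
          (Finset.mem_erase.mp (Finset.mem_of_mem_filter e he)).1
        simp [Function.update_of_ne hee]
      have hkey : ∀ y : V ⊕ V, winc y e0 → ∀ i : ℕ,
          ((wcut A y).filter fun e => Function.update φ' e0 j e = i).card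
            = ((wcut A' y).filter fun e => φ' e = i).card + (if j = i then 1 else 0) := by
        intro y hy i
        have hins : wcut A y = insert e0 (wcut A' y) := by
          ext e
          simp only [wcut, hA', Finset.mem_insert, Finset.mem_filter, Finset.mem_erase]
          constructor
          · rintro ⟨heA, hi⟩
            rcases eq_or_ne e e0 with rfl | hne'
            · exact Or.inl rfl
            · exact Or.inr ⟨⟨hne', heA⟩, hi⟩
          · rintro (rfl | ⟨⟨hne', heA⟩, hi⟩)
            · exact ⟨he0A, hy⟩
            · exact ⟨heA, hi⟩
        have hnm : e0 ∉ wcut A' y := by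
          simp [wcut, hA']
        rw [hins, Finset.filter_insert]
        by_cases hji : j = i
        · rw [if_pos (by simp [hji]),
            Finset.card_insert_of_notMem (fun h => hnm (Finset.mem_of_mem_filter _ h)),
            hfc y i, if_pos hji]
        · rw [if_neg (by simpa using hji), hfc y i, if_neg hji, Nat.add_zero]
      intro x hx
      by_cases hxe1 : x = x1
      · subst hxe1
        obtain ⟨i, hi⟩ := hgood1
        exact ⟨i, by rw [hkey x1 ((winc_iff e0 x1).mpr (Or.inl rfl)) i]; exact hi⟩
      by_cases hxe2 : x = x2
      · subst hxe2
        obtain ⟨i, hi⟩ := hgood2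
        exact ⟨i, by rw [hkey x2 ((winc_iff e0 x2).mpr (Or.inr rfl)) i]; exact hi⟩
      · have hxT' : x ∈ T' := by
          simp only [hT', Finset.mem_erase]
          exact ⟨hxe2, hxe1, hx⟩
        obtain ⟨i, hi⟩ := hg' x hxT'
        refine ⟨i, ?_⟩
        rw [← hcuteq x hxe1 hxe2, hfc x i]
        exact hi

end Aux

/-- Every digraph admits a weak-odd 3-edge coloring. -/
theorem weak_odd_three_colorable {V : Type*} [Fintype V] [DecidableEq V]
    (A : Finset (V × V)) (hloop : ∀ v : V, (v, v) ∉ A) :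
    ∃ φ : V × V → ℕ, IsWOColoring A 3 φ := by
  obtain ⟨φ, hb, hg⟩ := wmain (Finset.univ.filter
      (fun x : V ⊕ V => (wcut A x).Nonempty)).card A
    (Finset.univ.filter (fun x : V ⊕ V => (wcut A x).Nonempty)) le_rfl
    (fun x hx => (Finset.mem_filter.mp hx).2)
  refine ⟨φ, hb, ?_⟩
  intro v
  have hout : outCut A v = wcut A (Sum.inl v) := by
    ext e; simp [outCut, wcut, winc]
  have hin : inCut A v = wcut A (Sum.inr v) := by
    ext e; simp [inCut, wcut, winc]
  constructor
  · intro hne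
    rw [hout] at hne ⊢
    exact hg _ (Finset.mem_filter.mpr ⟨Finset.mem_univ _, hne⟩)
  · intro hne
    rw [hin] at hne ⊢
    exact hg _ (Finset.mem_filter.mpr ⟨Finset.mem_univ _, hne⟩)
end

section
/- Every strong semicomplete digraph on at least 2 vertices admits a weak-odd 2-edge coloring (color the arcs of a Hamiltonian dicycle with color 1 and all remaining arcs with color 2). -/
open Finset
open scoped Classical

open WeakOdd

/-- Every strong semicomplete digraph on at least two vertices admits a
weak-odd 2-edge coloring. -/
theorem strong_semicomplete_two_colorable {V : Type*} [Fintype V] [DecidableEq V]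
    (A : Finset (V × V)) (hS : IsSemicomplete A) (hcard : 2 ≤ Fintype.card V)
    (hstrong : ∀ u v : V, Relation.ReflTransGen (fun a b => (a, b) ∈ A) u v) :
    ∃ φ : V × V → ℕ, IsWOColoring A 2 φ := by
  classical
  set N : V → Finset V := fun v => Finset.univ.filter fun w => (v, w) ∈ A with hN
  have hall : ∀ s : Finset V, s.card ≤ (s.biUnion N).card := by
    intro s
    rcases s.eq_empty_or_nonempty with rfl | ⟨v, hv⟩
    · simp
    set T := s.biUnion N with hT
    have hmemT : ∀ a ∈ s, ∀ b, (a, b) ∈ A → b ∈ T := by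
      intro a ha b hab
      exact Finset.mem_biUnion.2 ⟨a, ha, by simp [hN, hab]⟩
    by_cases hsub : T ⊆ s
    · have hsuniv : ∀ u, u ∈ s := by
        intro u
        have h := hstrong v u
        induction h with
        | refl => exact hv
        | tail hr hab ih => exact hsub (hmemT _ ih _ hab)
      have hTuniv : ∀ u, u ∈ T := by
        intro u
        obtain ⟨y, hy⟩ : ∃ y : V, y ≠ u := Fintype.exists_ne_of_one_lt_card (by omega) u
        have h := hstrong y u
        rcases Relation.ReflTransGen.cases_tail h with h1 | ⟨c, _, hcu⟩
        · exact absurd h1.symm hy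
        · exact hmemT c (hsuniv c) u hcu
      have hTeq : T = Finset.univ := Finset.eq_univ_iff_forall.2 hTuniv
      have hseq : s = Finset.univ := Finset.eq_univ_iff_forall.2 hsuniv
      have h1 : T.card = Fintype.card V := by rw [hTeq]; exact Finset.card_univ
      have h2 : s.card ≤ Fintype.card V := Finset.card_le_univ s
      omega
    · obtain ⟨w, hwT, hws⟩ := Finset.not_subset.1 hsub
      have hsd : (s \ T).card ≤ 1 := by
        rw [Finset.card_le_one]
        intro a ha b hb
        by_contra hne
        rcases hS.2 a b hne with h | h
        · exact (Finset.mem_sdiff.1 hb).2 (hmemT a (Finset.mem_sdiff.1 ha).1 b h)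
        · exact (Finset.mem_sdiff.1 ha).2 (hmemT b (Finset.mem_sdiff.1 hb).1 a h)
      have hsplit : (s \ T).card + (s ∩ T).card = s.card :=
        Finset.card_sdiff_add_card_inter s T
      have h2 : (s ∩ T).card + 1 ≤ T.card := by
        have hins : insert w (s ∩ T) ⊆ T := by
          intro x hx
          rcases Finset.mem_insert.1 hx with rfl | hx
          · exact hwT
          · exact (Finset.mem_inter.1 hx).2
        have := Finset.card_le_card hins
        rwa [Finset.card_insert_of_notMem (fun hx => hws (Finset.mem_inter.1 hx).1)] at this
      omega
  obtain ⟨f, hfinj, hf⟩ := (Finset.all_card_le_biUnion_card_iff_exists_injective N).1 hall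
  have hfA : ∀ v, (v, f v) ∈ A := fun v => (Finset.mem_filter.1 (hf v)).2
  have hbij : Function.Bijective f := Finite.injective_iff_bijective.1 hfinj
  let g := Equiv.ofBijective f hbij
  refine ⟨fun p => if f p.1 = p.2 then 1 else 0, ?_, ?_⟩
  · intro p _; dsimp only; split <;> omega
  · intro v
    constructor
    · intro _
      refine ⟨1, ?_⟩
      have heq : ((outCut A v).filter fun e => (if f e.1 = e.2 then 1 else 0) = 1)
          = {(v, f v)} := by
        ext p
        simp only [outCut, Finset.mem_filter, Finset.mem_singleton]
        constructor
        · rintro ⟨⟨hpA, hp1⟩, hpφ⟩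
          have hfe : f p.1 = p.2 := by by_contra h; simp [h] at hpφ
          obtain ⟨p1, p2⟩ := p
          simp only at hp1 hfe
          subst hp1; subst hfe; rfl
        · rintro rfl
          exact ⟨⟨hfA v, rfl⟩, by simp⟩
      rw [heq]
      simp
    · intro _
      refine ⟨1, ?_⟩
      have heq : ((inCut A v).filter fun e => (if f e.1 = e.2 then 1 else 0) = 1)
          = {(g.symm v, v)} := by
        ext p
        simp only [inCut, Finset.mem_filter, Finset.mem_singleton]
        constructor
        · rintro ⟨⟨hpA, hp2⟩, hpφ⟩
          have hfe : f p.1 = p.2 := by by_contra h; simp [h] at hpφ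
          obtain ⟨p1, p2⟩ := p
          simp only at hp2 hfe
          subst hp2; subst hfe
          have : g.symm (f p1) = p1 := g.symm_apply_apply p1
          simp [this]
        · rintro rfl
          have hgv : f (g.symm v) = v := g.apply_symm_apply v
          have hA := hfA (g.symm v)
          rw [hgv] at hA
          exact ⟨⟨hA, rfl⟩, by simp [hgv]⟩
      rw [heq]
      simp
end

section
/- For any semicomplete digraph D, the defect of D equals 1 if D is a nontrivial even digraph with exactly one peripheral vertex, and equals 0 otherwise. -/
open Finset
open scoped Classical

open WeakOdd

open scoped symmDiff

namespace WOAux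

set_option linter.unusedSectionVars false

variable {V : Type*} [Fintype V] [DecidableEq V]

/-! ### Generic finset parity helpers -/

lemma card_symmDiff_helper {α : Type*} [DecidableEq α] (s t : Finset α) :
    (s ∆ t).card + 2 * (s ∩ t).card = s.card + t.card := by
  have h1 : s ∆ t = (s \ t) ∪ (t \ s) := by
    ext a; simp only [Finset.mem_symmDiff, Finset.mem_union, Finset.mem_sdiff]
  have h2 : Disjoint (s \ t) (t \ s) := by
    refine Finset.disjoint_left.mpr ?_; intro a ha hb; simp at ha hb; tauto
  have h3 := Finset.card_sdiff_add_card_inter s t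
  have h4 := Finset.card_sdiff_add_card_inter t s
  rw [h1, Finset.card_union_of_disjoint h2]
  rw [Finset.inter_comm] at h4
  omega

lemma filter_symmDiff_helper {α : Type*} [DecidableEq α] (s t : Finset α) (p : α → Prop)
    [DecidablePred p] : (s ∆ t).filter p = (s.filter p) ∆ (t.filter p) := by
  ext a; simp only [mem_filter, Finset.mem_symmDiff]; tauto

lemma even_sum_iff {α : Type*} (s : Finset α) (f : α → ℕ) :
    Even (∑ x ∈ s, f x) ↔ Even ((s.filter fun x => Odd (f x)).card) := by
  classical
  induction s using Finset.induction with
  | empty => simp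
  | @insert a s ha ih =>
    rw [Finset.sum_insert ha, Finset.filter_insert]
    by_cases h : Odd (f a)
    · rw [if_pos h, Finset.card_insert_of_notMem (by simp [ha]), Nat.even_add, ih,
        Nat.even_add_one]
      rw [Nat.not_even_iff_odd.symm] at h
      tauto
    · rw [if_neg h, Nat.even_add, ih]
      rw [Nat.not_even_iff_odd.symm, not_not] at h
      tauto

lemma symmDiff_subset {α : Type*} [DecidableEq α] {s t u : Finset α}
    (hs : s ⊆ u) (ht : t ⊆ u) : s ∆ t ⊆ u := by
  intro a ha; rw [Finset.mem_symmDiff] at ha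
  rcases ha with ⟨h, _⟩ | ⟨h, _⟩
  exacts [hs h, ht h]

lemma xor_helper {α : Sort*} {a b c w : α} (hbc : b ≠ c) :
    (¬ ((((w = a ∧ w ≠ b) ∨ (w = b ∧ w ≠ a))) ↔ (w = b ∨ w = c))) ↔
      ((w = a ∧ w ≠ c) ∨ (w = c ∧ w ≠ a)) := by
  by_cases h2 : w = b <;> by_cases h3 : w = c
  · exact absurd (h2.symm.trans h3) hbc
  all_goals by_cases h1 : w = a <;> tauto

/-! ### The bipartite split graph on `Bool × V` -/

/-- The semicut of a signed vertex: `(true, v)` is the out-cut, `(false, v)` the in-cut. -/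
def bcut (A : Finset (V × V)) (w : Bool × V) : Finset (V × V) :=
  cond w.1 (outCut A w.2) (inCut A w.2)

/-- Degree of a signed vertex with respect to an arc set. -/
def bdeg (S : Finset (V × V)) (w : Bool × V) : ℕ := (bcut S w).card

lemma bcut_eq_filter (S : Finset (V × V)) (w : Bool × V) :
    bcut S w = S.filter (fun e => cond w.1 e.1 e.2 = w.2) := by
  obtain ⟨b, v⟩ := w; cases b <;> rfl

lemma mem_bcut {A : Finset (V × V)} {w : Bool × V} {e : V × V} :
    e ∈ bcut A w ↔ e ∈ A ∧ (cond w.1 e.1 e.2) = w.2 := by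
  rw [bcut_eq_filter, mem_filter]

/-- A signed vertex is constrained if its semicut is nonempty of even size. -/
def Constrained (A : Finset (V × V)) (w : Bool × V) : Prop :=
  bdeg A w ≠ 0 ∧ Even (bdeg A w)

lemma bdeg_ne_zero_iff {A : Finset (V × V)} {w : Bool × V} :
    bdeg A w ≠ 0 ↔ ∃ e ∈ A, cond w.1 e.1 e.2 = w.2 := by
  constructor
  · intro h
    obtain ⟨e, he⟩ := Finset.card_pos.mp (Nat.pos_of_ne_zero h)
    rw [mem_bcut] at he; exact ⟨e, he.1, he.2⟩
  · rintro ⟨e, he, hc⟩ h0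
    exact Finset.notMem_empty e (Finset.card_eq_zero.mp h0 ▸ mem_bcut.mpr ⟨he, hc⟩)

/-- Adjacency in the split graph. -/
def Step (A : Finset (V × V)) (w w' : Bool × V) : Prop :=
  ∃ e ∈ A, (w = (true, e.1) ∧ w' = (false, e.2)) ∨ (w' = (true, e.1) ∧ w = (false, e.2))

/-- Reachability in the split graph. -/
def Reach (A : Finset (V × V)) : Bool × V → Bool × V → Prop :=
  Relation.ReflTransGen (Step A)

lemma Step.symm' {A : Finset (V × V)} {w w' : Bool × V} (h : Step A w w') : Step A w' w := by
  obtain ⟨e, he, h⟩ := h; exact ⟨e, he, h.symm⟩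

lemma arc_mem_iff {A : Finset (V × V)} {e : V × V} (he : e ∈ A) (t : Bool × V) :
    (Reach A t (true, e.1)) ↔ (Reach A t (false, e.2)) := by
  have hstep : Step A (true, e.1) (false, e.2) := ⟨e, he, Or.inl ⟨rfl, rfl⟩⟩
  exact ⟨fun h => h.tail hstep, fun h => h.tail hstep.symm'⟩

/-! ### Parity of degrees under symmetric difference -/

lemma bdeg_symmDiff_odd (S T : Finset (V × V)) (w : Bool × V) :
    Odd (bdeg (S ∆ T) w) ↔ ¬ (Odd (bdeg S w) ↔ Odd (bdeg T w)) := by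
  have h : bcut (S ∆ T) w = (bcut S w) ∆ (bcut T w) := by
    rw [bcut_eq_filter, bcut_eq_filter, bcut_eq_filter, filter_symmDiff_helper]
  have h2 := card_symmDiff_helper (bcut S w) (bcut T w)
  unfold bdeg
  rw [h, Nat.odd_iff, Nat.odd_iff, Nat.odd_iff]
  omega

lemma bdeg_singleton (e : V × V) (w : Bool × V) :
    Odd (bdeg {e} w) ↔ (w = (true, e.1) ∨ w = (false, e.2)) := by
  obtain ⟨b, v⟩ := w
  rw [bdeg, bcut_eq_filter, Finset.filter_singleton]
  by_cases h : cond b e.1 e.2 = v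
  · rw [if_pos h]
    cases b <;> simp at h <;> simp [Prod.ext_iff, h]
  · rw [if_neg h]
    cases b <;> simp at h <;> simp [Prod.ext_iff, h] <;> intro h2 <;> simp [h2] at h

lemma mem_symmDiff_singletons {a b w : Bool × V} :
    w ∈ (({a} : Finset (Bool × V)) ∆ {b}) ↔ ((w = a ∧ w ≠ b) ∨ (w = b ∧ w ≠ a)) := by
  simp [Finset.mem_symmDiff]

/-- Path toggling: along a reachability path there is an arc set whose degree
is odd exactly at the two endpoints. -/
lemma path_toggle {A : Finset (V × V)} {a b : Bool × V} (h : Reach A a b) :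
    ∃ S ⊆ A, ∀ w, Odd (bdeg S w) ↔ w ∈ (({a} : Finset (Bool × V)) ∆ {b}) := by
  induction h with
  | refl =>
    refine ⟨∅, Finset.empty_subset _, fun w => ?_⟩
    simp [bdeg, bcut_eq_filter]
  | @tail b c hab hbc ih =>
    obtain ⟨S, hSA, hS⟩ := ih
    obtain ⟨e, he, hor⟩ := hbc
    refine ⟨S ∆ {e}, symmDiff_subset hSA (by simp [he]), fun w => ?_⟩
    have h1 := bdeg_symmDiff_odd S {e} w
    have h2 := bdeg_singleton e w
    have hbc' : w = (true, e.1) ∨ w = (false, e.2) ↔ (w = b ∨ w = c) := by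
      rcases hor with ⟨h3, h4⟩ | ⟨h3, h4⟩ <;> subst h3 <;> subst h4 <;> tauto
    have hbcne : b ≠ c := by
      rcases hor with ⟨h3, h4⟩ | ⟨h3, h4⟩ <;> subst h3 <;> subst h4 <;> simp
    rw [h1, h2, hbc', hS w, mem_symmDiff_singletons, mem_symmDiff_singletons]
    exact xor_helper hbcne

/-! ### Handshake within a reachability class -/

lemma cond_eq_iff (w : Bool × V) (e : V × V) :
    (cond w.1 e.1 e.2 = w.2) ↔ (w = (true, e.1) ∨ w = (false, e.2)) := by
  obtain ⟨b, v⟩ := w; cases b <;> simp [Prod.ext_iff, eq_comm]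

lemma handshake {A S : Finset (V × V)} (hSA : S ⊆ A) (t : Bool × V) :
    Even (((univ.filter fun w => Reach A t w).filter fun w => Odd (bdeg S w)).card) := by
  set C := univ.filter fun w => Reach A t w with hC
  rw [← even_sum_iff]
  have h1 : ∀ w ∈ C, bdeg S w = ∑ e ∈ S, if cond w.1 e.1 e.2 = w.2 then 1 else 0 := by
    intro w _; rw [bdeg, bcut_eq_filter, Finset.card_filter]
  rw [Finset.sum_congr rfl h1, Finset.sum_comm]
  apply Finset.even_sum
  intro e he
  have key : ((true, e.1) ∈ C) ↔ ((false, e.2) ∈ C) := by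
    simp only [hC, mem_filter, mem_univ, true_and]
    exact arc_mem_iff (hSA he) t
  have h2 : (∑ w ∈ C, if cond w.1 e.1 e.2 = w.2 then 1 else 0) =
      (C.filter fun w => w = (true, e.1) ∨ w = (false, e.2)).card := by
    rw [Finset.card_filter]
    exact Finset.sum_congr rfl fun w _ => if_congr (cond_eq_iff w e) rfl rfl
  rw [h2]
  have hne : ((true, e.1) : Bool × V) ≠ (false, e.2) := by simp
  by_cases hmem : (true, e.1) ∈ C
  · have heq : (C.filter fun w => w = (true, e.1) ∨ w = (false, e.2)) =
        {(true, e.1), (false, e.2)} := by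
      ext w
      simp only [mem_filter, Finset.mem_insert, Finset.mem_singleton]
      constructor
      · tauto
      · rintro (rfl | rfl)
        exacts [⟨hmem, Or.inl rfl⟩, ⟨key.mp hmem, Or.inr rfl⟩]
    rw [heq, Finset.card_insert_of_notMem (by simp), Finset.card_singleton]
    exact even_two
  · have heq : (C.filter fun w => w = (true, e.1) ∨ w = (false, e.2)) = ∅ := by
      rw [Finset.filter_eq_empty_iff]
      rintro w hw (rfl | rfl)
      exacts [hmem hw, hmem (key.mpr hw)]
    rw [heq]; exact Even.zero

/-! ### Main induction -/

/-- If every fully-`P` reachability class is even, some arc subset has odd degree at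
every `P`-vertex. -/
lemma exists_good {A : Finset (V × V)} (P : Bool × V → Prop)
    (H : ∀ t : Bool × V, P t → (∀ w, Reach A t w → P w) →
      Even ((univ.filter fun w => Reach A t w).card)) :
    ∃ S ⊆ A, ∀ w, P w → Odd (bdeg S w) := by
  classical
  suffices h : ∀ k : ℕ, ∀ S ⊆ A,
      (univ.filter fun w : Bool × V => P w ∧ ¬ Odd (bdeg S w)).card ≤ k →
      ∃ S' ⊆ A, ∀ w, P w → Odd (bdeg S' w) by
    exact h _ ∅ (Finset.empty_subset _) le_rfl
  intro k
  induction k with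
  | zero =>
    intro S hSA hcard
    refine ⟨S, hSA, fun w hw => ?_⟩
    by_contra hodd
    have hmem : w ∈ univ.filter fun w : Bool × V => P w ∧ ¬ Odd (bdeg S w) :=
      mem_filter.mpr ⟨mem_univ w, hw, hodd⟩
    have := Finset.card_pos.mpr ⟨w, hmem⟩
    omega
  | succ k ih =>
    intro S hSA hcard
    set bad := univ.filter fun w : Bool × V => P w ∧ ¬ Odd (bdeg S w) with hbad
    rcases Finset.eq_empty_or_nonempty bad with hemp | ⟨t, ht⟩
    · refine ⟨S, hSA, fun w hw => ?_⟩
      by_contra hodd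
      exact Finset.notMem_empty w
        (hemp ▸ (mem_filter.mpr ⟨mem_univ w, hw, hodd⟩ :
          w ∈ univ.filter fun w : Bool × V => P w ∧ ¬ Odd (bdeg S w)))
    · rw [hbad, mem_filter] at ht
      obtain ⟨-, hPt, hode⟩ := ht
      by_cases hesc : ∃ w, Reach A t w ∧ ¬ P w
      · obtain ⟨w₀, hr, hnP⟩ := hesc
        obtain ⟨T, hTA, hT⟩ := path_toggle hr
        have htw : t ≠ w₀ := fun h => hnP (h ▸ hPt)
        refine ih (S ∆ T) (symmDiff_subset hSA hTA) ?_
        have hsub : (univ.filter fun w : Bool × V => P w ∧ ¬ Odd (bdeg (S ∆ T) w)) ⊆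
            bad.erase t := by
          intro x hx
          rw [mem_filter] at hx
          obtain ⟨-, hPx, hox⟩ := hx
          have hflip := bdeg_symmDiff_odd S T x
          have hmem := hT x
          rw [mem_symmDiff_singletons] at hmem
          rcases eq_or_ne x t with rfl | hxt
          · exfalso
            have : Odd (bdeg T x) := hmem.mpr (Or.inl ⟨rfl, htw⟩)
            exact hox (hflip.mpr (by tauto))
          · rcases eq_or_ne x w₀ with rfl | hxw
            · exact absurd hPx hnP
            · have hTev : ¬ Odd (bdeg T x) := fun h => by
                rcases hmem.mp h with ⟨h1, -⟩ | ⟨h1, -⟩; exacts [hxt h1, hxw h1]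
              refine Finset.mem_erase.mpr ⟨hxt, ?_⟩
              rw [hbad, mem_filter]
              exact ⟨mem_univ x, hPx, fun h => hox (hflip.mpr (by tauto))⟩
        calc (univ.filter fun w : Bool × V => P w ∧ ¬ Odd (bdeg (S ∆ T) w)).card
            ≤ (bad.erase t).card := Finset.card_le_card hsub
          _ ≤ bad.card - 1 := by
              rw [Finset.card_erase_of_mem
                (by rw [hbad, mem_filter]; exact ⟨mem_univ t, hPt, hode⟩)]
          _ ≤ k := by omega
      · push_neg at hesc
        have hfull : ∀ w, Reach A t w → P w := hesc
        have hevC := H t hPt hfull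
        have hevO := handshake hSA t
        set C := univ.filter fun w : Bool × V => Reach A t w with hC
        have hCbad : C.filter (fun w => ¬ Odd (bdeg S w)) =
            C \ C.filter (fun w => Odd (bdeg S w)) := by
          ext w; simp only [mem_filter, Finset.mem_sdiff]; tauto
        have hevB : Even ((C.filter (fun w => ¬ Odd (bdeg S w))).card) := by
          rw [hCbad, Finset.card_sdiff_of_subset (Finset.filter_subset _ _)]
          have := Finset.card_filter_le C (fun w => Odd (bdeg S w))
          rw [Nat.even_sub (Finset.card_filter_le _ _)]
          tauto
        have htB : t ∈ C.filter (fun w => ¬ Odd (bdeg S w)) := by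
          rw [mem_filter, hC, mem_filter]
          exact ⟨⟨mem_univ t, Relation.ReflTransGen.refl⟩, hode⟩
        obtain ⟨t', ht'B, ht't⟩ : ∃ t' ∈ C.filter (fun w => ¬ Odd (bdeg S w)), t' ≠ t := by
          have h1 := Finset.card_pos.mpr ⟨t, htB⟩
          have h2 : ((C.filter (fun w => ¬ Odd (bdeg S w))).erase t).Nonempty := by
            rw [← Finset.card_pos, Finset.card_erase_of_mem htB]
            rcases hevB with ⟨m, hm⟩; omega
          obtain ⟨t', ht'⟩ := h2
          rw [Finset.mem_erase] at ht'
          exact ⟨t', ht'.2, ht'.1⟩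
        rw [mem_filter, hC, mem_filter] at ht'B
        obtain ⟨⟨-, hrt'⟩, hot'⟩ := ht'B
        obtain ⟨T, hTA, hT⟩ := path_toggle hrt'
        refine ih (S ∆ T) (symmDiff_subset hSA hTA) ?_
        have hsub : (univ.filter fun w : Bool × V => P w ∧ ¬ Odd (bdeg (S ∆ T) w)) ⊆
            bad.erase t := by
          intro x hx
          rw [mem_filter] at hx
          obtain ⟨-, hPx, hox⟩ := hx
          have hflip := bdeg_symmDiff_odd S T x
          have hmem := hT x
          rw [mem_symmDiff_singletons] at hmem
          rcases eq_or_ne x t with rfl | hxt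
          · exact absurd (hflip.mpr (by
              have : Odd (bdeg T x) := hmem.mpr (Or.inl ⟨rfl, Ne.symm ht't⟩)
              tauto)) hox
          · rcases eq_or_ne x t' with rfl | hxt'
            · exact absurd (hflip.mpr (by
                have : Odd (bdeg T x) := hmem.mpr (Or.inr ⟨rfl, ht't⟩)
                tauto)) hox
            · have hTev : ¬ Odd (bdeg T x) := fun h => by
                rcases hmem.mp h with ⟨h1, -⟩ | ⟨h1, -⟩; exacts [hxt h1, hxt' h1]
              refine Finset.mem_erase.mpr ⟨hxt, ?_⟩
              rw [hbad, mem_filter]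
              exact ⟨mem_univ x, hPx, fun h => hox (hflip.mpr (by tauto))⟩
        calc (univ.filter fun w : Bool × V => P w ∧ ¬ Odd (bdeg (S ∆ T) w)).card
            ≤ (bad.erase t).card := Finset.card_le_card hsub
          _ ≤ bad.card - 1 := by
              rw [Finset.card_erase_of_mem
                (by rw [hbad, mem_filter]; exact ⟨mem_univ t, hPt, hode⟩)]
          _ ≤ k := by omega

/-- The exceptional configuration. -/
def Exceptional (A : Finset (V × V)) : Prop :=
  1 < Fintype.card V ∧ (∀ v : V, Even (outCut A v).card ∧ Even (inCut A v).card) ∧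
    (Finset.univ.filter fun v => Peripheral A v).card = 1

lemma structural {A : Finset (V × V)} (hS : IsSemicomplete A) (t : Bool × V)
    (hfull : ∀ w, Reach A t w → Constrained A w)
    (hodd : Odd ((univ.filter fun w => Reach A t w).card)) :
    ∃ b p, (univ.filter fun w => Reach A t w) = univ.erase (b, p) ∧ bdeg A (b, p) = 0 ∧
      Exceptional A := by
  classical
  set R : Bool × V → Prop := Reach A t with hR
  have arcIff : ∀ e ∈ A, (R (true, e.1) ↔ R (false, e.2)) := fun e he => arc_mem_iff he t
  have noloop : ∀ e ∈ A, e.1 ≠ e.2 := by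
    intro e he h
    exact hS.1 e.1 (by rwa [show e = (e.1, e.1) from Prod.ext rfl h.symm] at he)
  have hRt : R t := Relation.ReflTransGen.refl
  -- Claim A : some vertex is reached on both sides
  have claimA : ∃ u, R (true, u) ∧ R (false, u) := by
    by_contra hno
    push_neg at hno
    obtain ⟨b₀, v₀⟩ := t
    have hcon := hfull _ hRt
    obtain ⟨hne, heven⟩ := hcon
    cases b₀ with
    | true =>
      obtain ⟨e, he, hecond⟩ := bdeg_ne_zero_iff.mp hne
      simp only [cond] at hecond
      -- every out-arc of v₀ has head e.2
      have hall : ∀ f ∈ A, f.1 = v₀ → f.2 = e.2 := by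
        intro f hf hf1
        by_contra hne2
        have hRf : R (false, f.2) := (arcIff f hf).mp (by rw [hf1]; exact hRt)
        have hRe : R (false, e.2) := (arcIff e he).mp (by rw [hecond]; exact hRt)
        rcases hS.2 f.2 e.2 hne2 with harc | harc
        · exact hno f.2 ((arcIff _ harc).mpr hRe) hRf
        · exact hno e.2 ((arcIff _ harc).mpr hRf) hRe
      have : bcut A (true, v₀) = {e} := by
        ext f
        rw [mem_bcut]
        constructor
        · rintro ⟨hf, hc⟩
          simp only [cond] at hc
          have := hall f hf hc
          rw [Finset.mem_singleton]
          exact Prod.ext (hc.trans hecond.symm) this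
        · rintro h
          rw [Finset.mem_singleton] at h
          subst h
          exact ⟨he, hecond⟩
      rw [bdeg, this, Finset.card_singleton] at heven
      simp at heven
    | false =>
      obtain ⟨e, he, hecond⟩ := bdeg_ne_zero_iff.mp hne
      simp only [cond] at hecond
      have hall : ∀ f ∈ A, f.2 = v₀ → f.1 = e.1 := by
        intro f hf hf2
        by_contra hne2
        have hRf : R (true, f.1) := (arcIff f hf).mpr (by rw [hf2]; exact hRt)
        have hRe : R (true, e.1) := (arcIff e he).mpr (by rw [hecond]; exact hRt)
        rcases hS.2 f.1 e.1 hne2 with harc | harc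
        · exact hno e.1 hRe ((arcIff (f.1, e.1) harc).mp hRf)
        · exact hno f.1 hRf ((arcIff (e.1, f.1) harc).mp hRe)
      have : bcut A (false, v₀) = {e} := by
        ext f
        rw [mem_bcut]
        constructor
        · rintro ⟨hf, hc⟩
          simp only [cond] at hc
          have := hall f hf hc
          rw [Finset.mem_singleton]
          exact Prod.ext this (hc.trans hecond.symm)
        · rintro h
          rw [Finset.mem_singleton] at h
          subst h
          exact ⟨he, hecond⟩
      rw [bdeg, this, Finset.card_singleton] at heven
      simp at heven
  obtain ⟨u₀, hu₀t, hu₀f⟩ := claimA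
  -- Claim B : every vertex is reached on at least one side
  have claimB : ∀ z, R (true, z) ∨ R (false, z) := by
    intro z
    rcases eq_or_ne z u₀ with rfl | hz
    · exact Or.inl hu₀t
    · rcases hS.2 z u₀ hz with harc | harc
      · exact Or.inl ((arcIff (z, u₀) harc).mpr hu₀f)
      · exact Or.inr ((arcIff (u₀, z) harc).mp hu₀t)
  -- Claim C : two distinct true-only vertices are impossible
  have claimC : ∀ z w, z ≠ w → R (true, z) → ¬ R (false, z) → R (true, w) → R (false, w) := by
    intro z w hzw hz hnz hw
    rcases hS.2 z w hzw with harc | harc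
    · exact (arcIff (z, w) harc).mp hz
    · exact absurd ((arcIff (w, z) harc).mp hw) hnz
  have claimC' : ∀ z w, z ≠ w → R (false, z) → ¬ R (true, z) → R (false, w) → R (true, w) := by
    intro z w hzw hz hnz hw
    rcases hS.2 z w hzw with harc | harc
    · exact absurd ((arcIff (z, w) harc).mpr hw) hnz
    · exact (arcIff (w, z) harc).mpr hz
  by_cases hp : ∃ p, R (true, p) ∧ ¬ R (false, p)
  · obtain ⟨p, hpt, hpf⟩ := hp
    by_cases hq : ∃ q, R (false, q) ∧ ¬ R (true, q)
    · -- both defects: even class, contradiction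
      exfalso
      obtain ⟨q, hqf, hqt⟩ := hq
      have hpq : p ≠ q := fun h => hqt (h ▸ hpt)
      have hCeq : (univ.filter fun w => Reach A t w) =
          univ \ {(false, p), (true, q)} := by
        ext w
        obtain ⟨b, v⟩ := w
        simp only [mem_filter, mem_univ, true_and, Finset.mem_sdiff, Finset.mem_insert,
          Finset.mem_singleton, not_or]
        constructor
        · intro hw
          constructor
          · intro h1; rw [h1] at hw; exact hpf hw
          · intro h1; rw [h1] at hw; exact hqt hw
        · rintro ⟨h1, h2⟩
          cases b with
          | true =>
            rcases eq_or_ne v q with rfl | hvq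
            · exact absurd rfl h2
            · rcases claimB v with h | h
              · exact h
              · exact claimC' q v (Ne.symm hvq) hqf hqt h
          | false =>
            rcases eq_or_ne v p with rfl | hvp
            · exact absurd rfl h1
            · rcases claimB v with h | h
              · exact claimC p v (Ne.symm hvp) hpt hpf h
              · exact h
      rw [hCeq] at hodd
      rw [Finset.card_sdiff_of_subset (Finset.subset_univ _)] at hodd
      have hcard2 : ({((false : Bool), p), ((true : Bool), q)} : Finset (Bool × V)).card = 2 := by
        rw [Finset.card_insert_of_notMem (by simp), Finset.card_singleton]
      have hcardu : (univ : Finset (Bool × V)).card = 2 * Fintype.card V := by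
        simp [Fintype.card_prod]
      have hle : 2 ≤ 2 * Fintype.card V := by
        have : (1 : ℕ) ≤ Fintype.card V := Fintype.card_pos_iff.mpr ⟨p⟩
        omega
      rw [hcard2, hcardu, Nat.odd_iff] at hodd
      omega
    · -- exactly one defect, on the false side at p
      push_neg at hq
      have hall : ∀ z, R (true, z) := by
        intro z
        rcases claimB z with h | h
        · exact h
        · exact hq z h
      have hallf : ∀ z, z ≠ p → R (false, z) := by
        intro z hz
        by_contra hnz
        exact hpf (claimC z p hz (hall z) hnz hpt)
      have hCeq : (univ.filter fun w => Reach A t w) = univ.erase ((false : Bool), p) := by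
        ext w
        obtain ⟨b, v⟩ := w
        simp only [mem_filter, mem_univ, true_and, Finset.mem_erase, and_true]
        constructor
        · intro hw h1
          rw [h1] at hw
          exact hpf hw
        · intro h
          cases b with
          | true => exact hall v
          | false => exact hallf v (fun hvp => h (by rw [hvp]))
      have hdeg0 : bdeg A ((false : Bool), p) = 0 := by
        by_contra h0
        obtain ⟨e, he, hecond⟩ := bdeg_ne_zero_iff.mp h0
        simp only [cond] at hecond
        exact hpf (hecond ▸ (arcIff e he).mp (hall e.1))
      refine ⟨false, p, hCeq, hdeg0, ?_, ?_, ?_⟩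
      · -- 1 < card V
        have hcons := hfull (true, p) (hall p)
        obtain ⟨e, he, hecond⟩ := bdeg_ne_zero_iff.mp hcons.1
        simp only [cond] at hecond
        exact Fintype.one_lt_card_iff.mpr ⟨e.1, e.2, noloop e he⟩
      · -- even degrees
        intro v
        constructor
        · have := (hfull (true, v) (hall v)).2
          rwa [bdeg, bcut] at this
        · rcases eq_or_ne v p with rfl | hvp
          · have : (inCut A v).card = 0 := hdeg0
            rw [this]; exact Even.zero
          · have := (hfull (false, v) (hallf v hvp)).2
            rwa [bdeg, bcut] at this
      · -- exactly one peripheral vertex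
        have hper : (univ.filter fun v => Peripheral A v) = {p} := by
          ext v
          simp only [mem_filter, mem_univ, true_and, Finset.mem_singleton]
          constructor
          · intro hv
            by_contra hvp
            rcases hv with h | h
            · have := (hfull (true, v) (hall v)).1
              rw [bdeg, bcut] at this
              exact this (by rw [h]; rfl)
            · have := (hfull (false, v) (hallf v hvp)).1
              rw [bdeg, bcut] at this
              exact this (by rw [h]; rfl)
          · rintro rfl
            right
            rw [← Finset.card_eq_zero]
            exact hdeg0
        rw [hper, Finset.card_singleton]
  · -- no true-only defect
    push_neg at hp
    by_cases hq : ∃ q, R (false, q) ∧ ¬ R (true, q)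
    · -- exactly one defect, on the true side at q
      obtain ⟨q, hqf, hqt⟩ := hq
      have hallf : ∀ z, R (false, z) := by
        intro z
        rcases claimB z with h | h
        · exact hp z h
        · exact h
      have hallt : ∀ z, z ≠ q → R (true, z) := by
        intro z hz
        by_contra hnz
        exact hqt (claimC' z q hz (hallf z) hnz hqf)
      have hCeq : (univ.filter fun w => Reach A t w) = univ.erase ((true : Bool), q) := by
        ext w
        obtain ⟨b, v⟩ := w
        simp only [mem_filter, mem_univ, true_and, Finset.mem_erase, and_true]
        constructor
        · intro hw h1
          rw [h1] at hw
          exact hqt hw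
        · intro h
          cases b with
          | false => exact hallf v
          | true => exact hallt v (fun hvq => h (by rw [hvq]))
      have hdeg0 : bdeg A ((true : Bool), q) = 0 := by
        by_contra h0
        obtain ⟨e, he, hecond⟩ := bdeg_ne_zero_iff.mp h0
        simp only [cond] at hecond
        exact hqt (hecond ▸ (arcIff e he).mpr (hallf e.2))
      refine ⟨true, q, hCeq, hdeg0, ?_, ?_, ?_⟩
      · have hcons := hfull (false, q) (hallf q)
        obtain ⟨e, he, hecond⟩ := bdeg_ne_zero_iff.mp hcons.1
        simp only [cond] at hecond
        exact Fintype.one_lt_card_iff.mpr ⟨e.1, e.2, noloop e he⟩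
      · intro v
        constructor
        · rcases eq_or_ne v q with rfl | hvq
          · have : (outCut A v).card = 0 := hdeg0
            rw [this]; exact Even.zero
          · have := (hfull (true, v) (hallt v hvq)).2
            rwa [bdeg, bcut] at this
        · have := (hfull (false, v) (hallf v)).2
          rwa [bdeg, bcut] at this
      · have hper : (univ.filter fun v => Peripheral A v) = {q} := by
          ext v
          simp only [mem_filter, mem_univ, true_and, Finset.mem_singleton]
          constructor
          · intro hv
            by_contra hvq
            rcases hv with h | h
            · have := (hfull (true, v) (hallt v hvq)).1
              rw [bdeg, bcut] at this
              exact this (by rw [h]; rfl)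
            · have := (hfull (false, v) (hallf v)).1
              rw [bdeg, bcut] at this
              exact this (by rw [h]; rfl)
          · rintro rfl
            left
            rw [← Finset.card_eq_zero]
            exact hdeg0
        rw [hper, Finset.card_singleton]
    · -- no defects at all : the whole split graph is reached, even size
      exfalso
      push_neg at hq
      have hCeq : (univ.filter fun w => Reach A t w) = univ := by
        rw [Finset.filter_eq_self]
        rintro ⟨b, v⟩ _
        cases b with
        | true =>
          rcases claimB v with h | h
          · exact h
          · exact hq v h
        | false =>
          rcases claimB v with h | h
          · exact hp v h
          · exact h
      rw [hCeq] at hodd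
      have hcardu : (univ : Finset (Bool × V)).card = 2 * Fintype.card V := by
        simp [Fintype.card_prod]
      rw [hcardu, Nat.odd_iff] at hodd
      omega


lemma cut_char {φ : V × V → ℕ} (c : Finset (V × V)) (hc : ∀ e ∈ c, φ e < 2) :
    (c.Nonempty → ∃ i, Odd ((c.filter fun e => φ e = i).card)) ↔
      (c.Nonempty ∧ Even c.card → Odd ((c.filter fun e => φ e = 1).card)) := by
  have h01 : (c.filter fun e => φ e = 0) = (c.filter fun e => ¬ (φ e = 1)) := by
    ext e
    simp only [mem_filter, and_congr_right_iff]
    intro he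
    have := hc e he
    omega
  have hsplit : (c.filter fun e => φ e = 1).card + (c.filter fun e => φ e = 0).card = c.card := by
    rw [h01]
    exact Finset.card_filter_add_card_filter_not _
  constructor
  · rintro h ⟨hne, heven⟩
    obtain ⟨i, hi⟩ := h hne
    rcases Nat.lt_or_ge i 2 with hlt | hge
    · interval_cases i
      · rw [Nat.even_iff] at heven
        rw [Nat.odd_iff] at hi ⊢
        omega
      · exact hi
    · exfalso
      have : (c.filter fun e => φ e = i) = ∅ := by
        rw [Finset.filter_eq_empty_iff]
        intro e he hei
        have := hc e he
        omega
      rw [this, Finset.card_empty] at hi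
      simp at hi
  · intro h hne
    by_cases heven : Even c.card
    · exact ⟨1, h ⟨hne, heven⟩⟩
    · rw [Nat.not_even_iff_odd, Nat.odd_iff] at heven
      rcases Nat.even_or_odd ((c.filter fun e => φ e = 1).card) with h1 | h1
      · refine ⟨0, ?_⟩
        rw [Nat.even_iff] at h1
        rw [Nat.odd_iff]
        omega
      · exact ⟨1, h1⟩

lemma satAt_iff {A : Finset (V × V)} {φ : V × V → ℕ} (hb : ∀ e ∈ A, φ e < 2) (v : V) :
    SatAt A φ v ↔
      ((Constrained A (true, v) → Odd (bdeg (A.filter fun e => φ e = 1) (true, v))) ∧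
       (Constrained A (false, v) → Odd (bdeg (A.filter fun e => φ e = 1) (false, v)))) := by
  have hbo : ∀ e ∈ outCut A v, φ e < 2 := fun e he => hb e (Finset.filter_subset _ _ he)
  have hbi : ∀ e ∈ inCut A v, φ e < 2 := fun e he => hb e (Finset.filter_subset _ _ he)
  have h1 : bdeg (A.filter fun e => φ e = 1) (true, v) =
      ((outCut A v).filter fun e => φ e = 1).card := by
    rw [bdeg]
    show ((A.filter fun e => φ e = 1).filter fun e => e.1 = v).card = _
    rw [Finset.filter_comm]
    rfl
  have h2 : bdeg (A.filter fun e => φ e = 1) (false, v) =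
      ((inCut A v).filter fun e => φ e = 1).card := by
    rw [bdeg]
    show ((A.filter fun e => φ e = 1).filter fun e => e.2 = v).card = _
    rw [Finset.filter_comm]
    rfl
  have hc1 : Constrained A (true, v) ↔ (outCut A v).Nonempty ∧ Even (outCut A v).card := by
    rw [Constrained]
    show (outCut A v).card ≠ 0 ∧ Even (outCut A v).card ↔ _
    rw [Finset.card_ne_zero]
  have hc2 : Constrained A (false, v) ↔ (inCut A v).Nonempty ∧ Even (inCut A v).card := by
    rw [Constrained]
    show (inCut A v).card ≠ 0 ∧ Even (inCut A v).card ↔ _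
    rw [Finset.card_ne_zero]
  rw [SatAt, cut_char _ hbo, cut_char _ hbi, h1, h2, hc1, hc2]


/-! ### Infeasibility in the exceptional case -/

lemma infeasible {A : Finset (V × V)} (hS : IsSemicomplete A) (hE : Exceptional A)
    {φ : V × V → ℕ} (hb : ∀ e ∈ A, φ e < 2) : ∃ v, ¬ SatAt A φ v := by
  classical
  by_contra hall
  push_neg at hall
  obtain ⟨hcard, hdeg, hper⟩ := hE
  obtain ⟨p, hpeq⟩ := Finset.card_eq_one.mp hper
  have hpP : Peripheral A p := (mem_filter.mp (hpeq ▸ Finset.mem_singleton_self p)).2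
  have huniq : ∀ q, Peripheral A q → q = p := fun q hq =>
    Finset.mem_singleton.mp (hpeq ▸ mem_filter.mpr ⟨mem_univ q, hq⟩)
  obtain ⟨q, hqp⟩ := Fintype.exists_ne_of_one_lt_card hcard p
  have harc : (outCut A p).Nonempty ∨ (inCut A p).Nonempty := by
    rcases hS.2 p q (Ne.symm hqp) with h | h
    · exact Or.inl ⟨(p, q), mem_filter.mpr ⟨h, rfl⟩⟩
    · exact Or.inr ⟨(q, p), mem_filter.mpr ⟨h, rfl⟩⟩
  set S := A.filter (fun e => φ e = 1) with hSdef
  have hSA : S ⊆ A := Finset.filter_subset _ _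
  have hOdd := fun v => (satAt_iff hb v).mp (hall v)
  have hnotper : ∀ v, v ≠ p → (outCut A v).Nonempty ∧ (inCut A v).Nonempty := by
    intro v hv
    have h1 : ¬ Peripheral A v := fun h => hv (huniq v h)
    rw [Peripheral, not_or] at h1
    rw [Finset.nonempty_iff_ne_empty, Finset.nonempty_iff_ne_empty]
    exact h1
  have hsum1 : S.card = ∑ v, bdeg S (true, v) :=
    Finset.card_eq_sum_card_fiberwise (fun e (_ : e ∈ S) => mem_univ e.1)
  have hsum2 : S.card = ∑ v, bdeg S (false, v) :=
    Finset.card_eq_sum_card_fiberwise (fun e (_ : e ∈ S) => mem_univ e.2)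
  have e1 := even_sum_iff univ (fun v => bdeg S (true, v))
  have e2 := even_sum_iff univ (fun v => bdeg S (false, v))
  rw [← hsum1] at e1
  rw [← hsum2] at e2
  have hn : 1 ≤ Fintype.card V := by omega
  rcases hpP with hout | hin
  · -- out-cut of p is empty
    have hinNE : (inCut A p).Nonempty := by
      rcases harc with h | h
      · rw [hout] at h; exact absurd h (by simp [Finset.not_nonempty_empty])
      · exact h
    have hf1 : (univ.filter fun v => Odd (bdeg S (true, v))) = univ.erase p := by
      ext v
      simp only [mem_filter, mem_univ, true_and, Finset.mem_erase, and_true]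
      constructor
      · intro hv hvp
        subst hvp
        have hz : bdeg S (true, v) = 0 := by
          rw [bdeg, Finset.card_eq_zero]
          have hsub : bcut S (true, v) ⊆ bcut A (true, v) := by
            intro e he; rw [mem_bcut] at he ⊢; exact ⟨hSA he.1, he.2⟩
          have : bcut A (true, v) = ∅ := hout
          rw [this] at hsub
          exact Finset.subset_empty.mp hsub
        rw [hz] at hv
        simp at hv
      · intro hvp
        refine (hOdd v).1 ⟨?_, (hdeg v).1⟩
        rw [← Finset.card_ne_zero] at *
        exact Finset.card_ne_zero.mpr (hnotper v hvp).1
    have hf2 : (univ.filter fun v => Odd (bdeg S (false, v))) = univ := by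
      rw [Finset.filter_eq_self]
      intro v _
      rcases eq_or_ne v p with rfl | hvp
      · exact (hOdd v).2 ⟨Finset.card_ne_zero.mpr hinNE, (hdeg v).2⟩
      · exact (hOdd v).2 ⟨Finset.card_ne_zero.mpr (hnotper v hvp).2, (hdeg v).2⟩
    rw [hf1, Finset.card_erase_of_mem (mem_univ p), Finset.card_univ] at e1
    rw [hf2, Finset.card_univ] at e2
    simp only [Nat.even_iff] at e1 e2
    omega
  · -- in-cut of p is empty
    have houtNE : (outCut A p).Nonempty := by
      rcases harc with h | h
      · exact h
      · rw [hin] at h; exact absurd h (by simp [Finset.not_nonempty_empty])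
    have hf1 : (univ.filter fun v => Odd (bdeg S (false, v))) = univ.erase p := by
      ext v
      simp only [mem_filter, mem_univ, true_and, Finset.mem_erase, and_true]
      constructor
      · intro hv hvp
        subst hvp
        have hz : bdeg S (false, v) = 0 := by
          rw [bdeg, Finset.card_eq_zero]
          have hsub : bcut S (false, v) ⊆ bcut A (false, v) := by
            intro e he; rw [mem_bcut] at he ⊢; exact ⟨hSA he.1, he.2⟩
          have : bcut A (false, v) = ∅ := hin
          rw [this] at hsub
          exact Finset.subset_empty.mp hsub
        rw [hz] at hv
        simp at hv
      · intro hvp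
        refine (hOdd v).2 ⟨?_, (hdeg v).2⟩
        exact Finset.card_ne_zero.mpr (hnotper v hvp).2
    have hf2 : (univ.filter fun v => Odd (bdeg S (true, v))) = univ := by
      rw [Finset.filter_eq_self]
      intro v _
      rcases eq_or_ne v p with rfl | hvp
      · exact (hOdd v).1 ⟨Finset.card_ne_zero.mpr houtNE, (hdeg v).1⟩
      · exact (hOdd v).1 ⟨Finset.card_ne_zero.mpr (hnotper v hvp).1, (hdeg v).1⟩
    rw [hf2, Finset.card_univ] at e1
    rw [hf1, Finset.card_erase_of_mem (mem_univ p), Finset.card_univ] at e2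
    simp only [Nat.even_iff] at e1 e2
    omega

/-! ### Building a coloring from an arc subset -/

lemma coloring_of_subset {A S : Finset (V × V)} (hSA : S ⊆ A) :
    ∃ φ : V × V → ℕ, (∀ e ∈ A, φ e < 2) ∧ (A.filter fun e => φ e = 1) = S := by
  refine ⟨fun e => if e ∈ S then 1 else 0, fun e _ => by dsimp only; split <;> omega, ?_⟩
  ext e
  simp only [mem_filter]
  constructor
  · rintro ⟨he, h⟩
    by_cases hs : e ∈ S
    · exact hs
    · simp [hs] at h
  · intro hs
    exact ⟨hSA hs, by simp [hs]⟩

end WOAux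

open WOAux

/-- The defect of a semicomplete digraph is 1 if it is a nontrivial even digraph
with exactly one peripheral vertex, and 0 otherwise. -/
theorem semicomplete_defect {V : Type*} [Fintype V] [DecidableEq V]
    (A : Finset (V × V)) (hS : IsSemicomplete A) :
    ((1 < Fintype.card V ∧ (∀ v : V, Even (outCut A v).card ∧ Even (inCut A v).card) ∧
        (Finset.univ.filter fun v => Peripheral A v).card = 1) → defect A = 1) ∧
    ((¬ (1 < Fintype.card V ∧ (∀ v : V, Even (outCut A v).card ∧ Even (inCut A v).card) ∧
        (Finset.univ.filter fun v => Peripheral A v).card = 1)) → defect A = 0) := by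
  classical
  constructor
  · -- exceptional case : defect = 1
    intro hE
    have hE' : Exceptional A := hE
    obtain ⟨hcard, hdeg, hper⟩ := hE
    obtain ⟨p, hpeq⟩ := Finset.card_eq_one.mp hper
    have hpP : Peripheral A p := (mem_filter.mp (hpeq ▸ Finset.mem_singleton_self p)).2
    have huniq : ∀ q, Peripheral A q → q = p := fun q hq =>
      Finset.mem_singleton.mp (hpeq ▸ mem_filter.mpr ⟨mem_univ q, hq⟩)
    obtain ⟨q, hqp⟩ := Fintype.exists_ne_of_one_lt_card hcard p
    have harc : (outCut A p).Nonempty ∨ (inCut A p).Nonempty := by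
      rcases hS.2 p q (Ne.symm hqp) with h | h
      · exact Or.inl ⟨(p, q), mem_filter.mpr ⟨h, rfl⟩⟩
      · exact Or.inr ⟨(q, p), mem_filter.mpr ⟨h, rfl⟩⟩
    set what : Bool × V := if outCut A p = ∅ then (false, p) else (true, p) with hwhat
    have hwhat2 : what.2 = p := by rw [hwhat]; split <;> rfl
    -- a coloring that fails only at p
    have hfeas : ∃ S ⊆ A, ∀ w, (Constrained A w ∧ w ≠ what) → Odd (bdeg S w) := by
      apply exists_good (P := fun w => Constrained A w ∧ w ≠ what)
      intro t hPt hfull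
      by_contra hodd
      rw [Nat.not_even_iff_odd] at hodd
      obtain ⟨b, p', hCeq, hdeg0, -⟩ :=
        structural hS t (fun w hw => (hfull w hw).1) hodd
      have hp'per : Peripheral A p' := by
        cases b with
        | true => exact Or.inl (Finset.card_eq_zero.mp hdeg0)
        | false => exact Or.inr (Finset.card_eq_zero.mp hdeg0)
      have hp'p : p' = p := huniq p' hp'per
      subst hp'p
      have hwne : what ≠ (b, p') := by
        cases b with
        | true =>
          have : outCut A p' = ∅ := Finset.card_eq_zero.mp hdeg0
          rw [hwhat, if_pos this]
          simp
        | false =>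
          have hin : inCut A p' = ∅ := Finset.card_eq_zero.mp hdeg0
          have hout : outCut A p' ≠ ∅ := by
            rcases harc with h | h
            · exact Finset.nonempty_iff_ne_empty.mp h
            · rw [hin] at h; exact absurd h (by simp [Finset.not_nonempty_empty])
          rw [hwhat, if_neg hout]
          simp
      have hwC : what ∈ univ.filter fun w => Reach A t w := by
        rw [hCeq, Finset.mem_erase]
        exact ⟨hwne, mem_univ what⟩
      rw [mem_filter] at hwC
      exact (hfull what hwC.2).2 rfl
    obtain ⟨S, hSA, hgood⟩ := hfeas
    obtain ⟨φ, hb, hfilter⟩ := coloring_of_subset hSA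
    have hsat : ∀ v, v ≠ p → SatAt A φ v := by
      intro v hv
      rw [satAt_iff hb v, hfilter]
      constructor
      · intro hc
        exact hgood _ ⟨hc, fun h => hv (by rw [← hwhat2, ← h])⟩
      · intro hc
        exact hgood _ ⟨hc, fun h => hv (by rw [← hwhat2, ← h])⟩
    have hfail : (univ.filter fun v => ¬ SatAt A φ v) = {p} := by
      have hsub : (univ.filter fun v => ¬ SatAt A φ v) ⊆ {p} := by
        intro v hv
        rw [mem_filter] at hv
        rw [Finset.mem_singleton]
        by_contra hvp
        exact hv.2 (hsat v hvp)
      have hne : (univ.filter fun v => ¬ SatAt A φ v).Nonempty := by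
        obtain ⟨v, hv⟩ := infeasible hS hE' hb
        exact ⟨v, mem_filter.mpr ⟨mem_univ v, hv⟩⟩
      rcases Finset.subset_singleton_iff.mp hsub with h | h
      · rw [h] at hne; exact absurd hne (by simp [Finset.not_nonempty_empty])
      · exact h
    have h1 : (1 : ℕ) ∈ {m | ∃ φ : V × V → ℕ, (∀ e ∈ A, φ e < 2) ∧
        (Finset.univ.filter fun v => ¬ SatAt A φ v).card = m} :=
      ⟨φ, hb, by rw [hfail, Finset.card_singleton]⟩
    have h0 : (0 : ℕ) ∉ {m | ∃ φ : V × V → ℕ, (∀ e ∈ A, φ e < 2) ∧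
        (Finset.univ.filter fun v => ¬ SatAt A φ v).card = m} := by
      rintro ⟨ψ, hbψ, hψ⟩
      obtain ⟨v, hv⟩ := infeasible hS hE' hbψ
      rw [Finset.card_eq_zero, Finset.filter_eq_empty_iff] at hψ
      exact hψ (mem_univ v) hv
    have hle : defect A ≤ 1 := Nat.sInf_le h1
    have hmem : defect A ∈ {m | ∃ φ : V × V → ℕ, (∀ e ∈ A, φ e < 2) ∧
        (Finset.univ.filter fun v => ¬ SatAt A φ v).card = m} :=
      Nat.sInf_mem ⟨1, h1⟩
    have hne0 : defect A ≠ 0 := fun h => h0 (h ▸ hmem)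
    omega
  · -- non-exceptional case : defect = 0
    intro hNE
    have hfeas : ∃ S ⊆ A, ∀ w, Constrained A w → Odd (bdeg S w) := by
      apply exists_good (P := Constrained A)
      intro t hPt hfull
      by_contra hodd
      rw [Nat.not_even_iff_odd] at hodd
      obtain ⟨-, -, -, -, hexc⟩ := structural hS t hfull hodd
      exact hNE hexc
    obtain ⟨S, hSA, hgood⟩ := hfeas
    obtain ⟨φ, hb, hfilter⟩ := coloring_of_subset hSA
    have hsat : ∀ v, SatAt A φ v := by
      intro v
      rw [satAt_iff hb v, hfilter]
      exact ⟨fun h => hgood _ h, fun h => hgood _ h⟩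
    have h0 : (0 : ℕ) ∈ {m | ∃ φ : V × V → ℕ, (∀ e ∈ A, φ e < 2) ∧
        (Finset.univ.filter fun v => ¬ SatAt A φ v).card = m} := by
      refine ⟨φ, hb, ?_⟩
      rw [Finset.card_eq_zero, Finset.filter_eq_empty_iff]
      intro v _
      simp only [not_not]
      exact hsat v
    exact Nat.sInf_eq_zero.mpr (Or.inl h0)
end

section
/- Let D be a nontrivial even semicomplete digraph with exactly one peripheral vertex, and let v be any prescribed vertex of D. Then D admits a 2-arc-coloring such that the weak-odd condition is satisfied at every vertex except possibly v. -/
open Finset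
open scoped Classical

open WeakOdd

private lemma sum_ite_subtype_zmod {α : Type*} [Fintype α] [DecidableEq α]
    (P : α → Prop) [DecidablePred P]
    (f : {x // P x} → ZMod 2) (c : α) :
    (∑ x : {x // P x}, if c = ↑x then f x else 0) = if h : P c then f ⟨c, h⟩ else 0 := by
  split_ifs with h
  · rw [Fintype.sum_eq_single (⟨c, h⟩ : {x // P x})]
    · simp
    · intro x hx
      refine if_neg fun hc => hx ?_
      exact Subtype.ext hc.symm
  · exact Finset.sum_eq_zero fun x _ => if_neg fun hc => h (by rw [hc]; exact x.2)

private lemma odd_of_natCast_eq_one {n : ℕ} (h : (n : ZMod 2) = 1) : Odd n := by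
  rcases Nat.even_or_odd n with he | ho
  · exfalso
    obtain ⟨k, rfl⟩ := he
    have h0 : ((k + k : ℕ) : ZMod 2) = 0 := by
      push_cast
      rw [← two_mul]
      have h2 : (2 : ZMod 2) = 0 := by decide
      rw [h2, zero_mul]
    rw [h0] at h
    exact absurd h (by decide)
  · exact ho

private lemma sum_zmod_eq_card_filter {α : Type*} [DecidableEq α] (S : Finset α)
    (X : α → ZMod 2) :
    ∑ e ∈ S, X e = ((S.filter fun e => X e = 1).card : ZMod 2) := by
  classical
  rw [← Finset.sum_boole]
  exact Finset.sum_congr rfl fun e _ => by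
    rcases (by decide : ∀ y : ZMod 2, y = 0 ∨ y = 1) (X e) with h | h <;> simp [h]

private lemma exists_parity_vector {V : Type*} [Fintype V] [DecidableEq V]
    (A : Finset (V × V)) (hS : IsSemicomplete A)
    (heven : ∀ u : V, Even (outCut A u).card ∧ Even (inCut A u).card) (v : V) :
    ∃ X : V × V → ZMod 2, ∀ u : V, u ≠ v →
      ((outCut A u).Nonempty → ∑ e ∈ outCut A u, X e = 1) ∧
      ((inCut A u).Nonempty → ∑ e ∈ inCut A u, X e = 1) := by
  classical
  set P₁ : V → Prop := fun u => u ≠ v ∧ (outCut A u).Nonempty with hP₁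
  set P₂ : V → Prop := fun u => u ≠ v ∧ (inCut A u).Nonempty with hP₂
  set M : Matrix ({u // P₁ u} ⊕ {u // P₂ u}) {e // e ∈ A} (ZMod 2) := fun r e =>
    Sum.casesOn r (fun a => if (e : V × V).1 = ↑a then 1 else 0)
      (fun b => if (e : V × V).2 = ↑b then 1 else 0) with hM
  have hadd : ∀ x y : ZMod 2, x + y = 0 → x = y := by decide
  have hLI : LinearIndependent (ZMod 2) M := by
    rw [Fintype.linearIndependent_iff]
    intro g hg
    set t : V → ZMod 2 := fun a => if h : P₁ a then g (Sum.inl ⟨a, h⟩) else 0 with ht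
    set s : V → ZMod 2 := fun b => if h : P₂ b then g (Sum.inr ⟨b, h⟩) else 0 with hs
    have harc : ∀ e ∈ A, t e.1 = s e.2 := by
      intro e he
      have h0 : (∑ i, g i • M i) ⟨e, he⟩ = 0 := by rw [hg]; rfl
      simp only [Finset.sum_apply, Pi.smul_apply, smul_eq_mul] at h0
      rw [Fintype.sum_sum_type] at h0
      have e1 : ∀ a : {u // P₁ u},
          g (Sum.inl a) * M (Sum.inl a) ⟨e, he⟩ =
            (if e.1 = ↑a then g (Sum.inl a) else 0) := by
        intro a
        simp only [hM]
        split_ifs <;> ring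
      have e2 : ∀ b : {u // P₂ u},
          g (Sum.inr b) * M (Sum.inr b) ⟨e, he⟩ =
            (if e.2 = ↑b then g (Sum.inr b) else 0) := by
        intro b
        simp only [hM]
        split_ifs <;> ring
      rw [Finset.sum_congr rfl (fun a _ => e1 a),
        Finset.sum_congr rfl (fun b _ => e2 b),
        sum_ite_subtype_zmod P₁ (fun a => g (Sum.inl a)) e.1,
        sum_ite_subtype_zmod P₂ (fun b => g (Sum.inr b)) e.2] at h0
      exact hadd _ _ h0
    have htv : t v = 0 := dif_neg (fun h => h.1 rfl)
    have hsv : s v = 0 := dif_neg (fun h => h.1 rfl)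
    have htP : ∀ a, t a ≠ 0 → P₁ a := by
      intro a h
      by_contra hP
      exact h (dif_neg hP)
    have hsP : ∀ b, s b ≠ 0 → P₂ b := by
      intro b h
      by_contra hP
      exact h (dif_neg hP)
    have h01 : ∀ x : ZMod 2, x ≠ 0 → x = 1 := by decide
    have hone : (1 : ZMod 2) ≠ 0 := by decide
    -- a vertex of T is dominated by v, hence not in U
    have hTU : ∀ a, t a = 1 → s a = 0 := by
      intro a ha
      have hav : a ≠ v := (htP a (by rw [ha]; exact hone)).1
      have hnav : (a, v) ∉ A := by
        intro hA
        have h1 := harc (a, v) hA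
        rw [ha, hsv] at h1
        exact hone h1
      have hva : (v, a) ∈ A := by
        rcases hS.2 v a (Ne.symm hav) with h | h
        · exact h
        · exact absurd h hnav
      have h1 := harc (v, a) hva
      rw [htv] at h1
      exact h1.symm
    have hUT : ∀ b, s b = 1 → t b = 0 := by
      intro b hb
      have hbv : b ≠ v := (hsP b (by rw [hb]; exact hone)).1
      have hnvb : (v, b) ∉ A := by
        intro hA
        have h1 := harc (v, b) hA
        rw [htv, hb] at h1
        exact hone h1.symm
      have hbvA : (b, v) ∈ A := by
        rcases hS.2 b v hbv with h | h
        · exact h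
        · exact absurd h hnvb
      have h1 := harc (b, v) hbvA
      rw [hsv] at h1
      exact h1
    have hT0 : ∀ a, t a = 0 := by
      intro a
      by_contra hta
      have ha1 : t a = 1 := h01 _ hta
      obtain ⟨hav, hne⟩ := htP a hta
      obtain ⟨e, heo⟩ := hne
      obtain ⟨heA, he1⟩ := Finset.mem_filter.mp heo
      have hsb : s e.2 = 1 := by
        have h1 := harc e heA
        rw [he1, ha1] at h1
        exact h1.symm
      have hout : outCut A a = {(a, e.2)} := by
        apply Finset.eq_singleton_iff_unique_mem.mpr
        constructor
        · have he : e = (a, e.2) := Prod.ext he1 rfl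
          rwa [← he]
        · intro e' he'
          obtain ⟨he'A, he'1⟩ := Finset.mem_filter.mp he'
          have hsc : s e'.2 = 1 := by
            have h1 := harc e' he'A
            rw [he'1, ha1] at h1
            exact h1.symm
          have hcb : e'.2 = e.2 := by
            by_contra hcb
            rcases hS.2 e'.2 e.2 hcb with hbc | hcb2
            · have h1 := harc _ hbc
              rw [hUT _ hsc, hsb] at h1
              exact (by decide : (0 : ZMod 2) ≠ 1) h1
            · have h1 := harc _ hcb2
              rw [hUT _ hsb, hsc] at h1
              exact (by decide : (0 : ZMod 2) ≠ 1) h1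
          exact Prod.ext he'1 hcb
      have hev := (heven a).1
      rw [hout, Finset.card_singleton] at hev
      exact Nat.not_even_one hev
    have hS0 : ∀ b, s b = 0 := by
      intro b
      by_contra hsb
      obtain ⟨hbv, hne⟩ := hsP b hsb
      obtain ⟨e, hei⟩ := hne
      obtain ⟨heA, he2⟩ := Finset.mem_filter.mp hei
      have h1 := harc e heA
      rw [hT0 e.1, he2] at h1
      exact hsb h1.symm
    intro i
    cases i with
    | inl a =>
        have h1 := hT0 ↑a
        rw [ht] at h1
        simpa [dif_pos a.2] using h1
    | inr b =>
        have h1 := hS0 ↑b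
        rw [hs] at h1
        simpa [dif_pos b.2] using h1
  have hrank := hLI.rank_matrix
  have htop : LinearMap.range M.mulVecLin = ⊤ := by
    apply Submodule.eq_top_of_finrank_eq
    exact hrank.trans (Module.finrank_pi (ZMod 2)).symm
  have h1mem : (fun _ => (1 : ZMod 2)) ∈ LinearMap.range M.mulVecLin := by
    rw [htop]; trivial
  obtain ⟨x, hx⟩ := h1mem
  refine ⟨fun e => if h : e ∈ A then x ⟨e, h⟩ else 0, ?_⟩
  intro u hu
  constructor
  · intro hne
    have hr := congr_fun hx (Sum.inl ⟨u, hu, hne⟩)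
    simp only [Matrix.mulVecLin_apply, Matrix.mulVec, dotProduct] at hr
    calc ∑ e ∈ outCut A u, (if h : e ∈ A then x ⟨e, h⟩ else 0)
        = ∑ e ∈ A, if e.1 = u then (if h : e ∈ A then x ⟨e, h⟩ else 0) else 0 :=
          Finset.sum_filter _ _
      _ = ∑ e : {e // e ∈ A},
            (if (↑e : V × V).1 = u then (if h : (↑e : V × V) ∈ A then x ⟨↑e, h⟩ else 0) else 0) :=
          (Finset.sum_coe_sort A _).symm
      _ = ∑ e : {e // e ∈ A}, M (Sum.inl ⟨u, hu, hne⟩) e * x e := by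
          refine Finset.sum_congr rfl fun e _ => ?_
          rw [dif_pos e.2]
          show (if (↑e : V × V).1 = u then x ⟨↑e, e.2⟩ else 0)
              = (if (↑e : V × V).1 = u then 1 else 0) * x e
          split_ifs with h
          · rw [one_mul]
          · rw [zero_mul]
      _ = 1 := hr
  · intro hne
    have hr := congr_fun hx (Sum.inr ⟨u, hu, hne⟩)
    simp only [Matrix.mulVecLin_apply, Matrix.mulVec, dotProduct] at hr
    calc ∑ e ∈ inCut A u, (if h : e ∈ A then x ⟨e, h⟩ else 0)
        = ∑ e ∈ A, if e.2 = u then (if h : e ∈ A then x ⟨e, h⟩ else 0) else 0 :=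
          Finset.sum_filter _ _
      _ = ∑ e : {e // e ∈ A},
            (if (↑e : V × V).2 = u then (if h : (↑e : V × V) ∈ A then x ⟨↑e, h⟩ else 0) else 0) :=
          (Finset.sum_coe_sort A _).symm
      _ = ∑ e : {e // e ∈ A}, M (Sum.inr ⟨u, hu, hne⟩) e * x e := by
          refine Finset.sum_congr rfl fun e _ => ?_
          rw [dif_pos e.2]
          show (if (↑e : V × V).2 = u then x ⟨↑e, e.2⟩ else 0)
              = (if (↑e : V × V).2 = u then 1 else 0) * x e
          split_ifs with h
          · rw [one_mul]
          · rw [zero_mul]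
      _ = 1 := hr

/-- A nontrivial even semicomplete digraph with exactly one peripheral vertex admits
a 2-arc-coloring satisfying the weak-odd condition everywhere except possibly at a
prescribed vertex. -/
theorem bad_semicomplete_prescribed {V : Type*} [Fintype V] [DecidableEq V]
    (A : Finset (V × V)) (hS : IsSemicomplete A) (hnt : 1 < Fintype.card V)
    (heven : ∀ v : V, Even (outCut A v).card ∧ Even (inCut A v).card)
    (hper : (Finset.univ.filter fun v => Peripheral A v).card = 1) (v : V) :
    ∃ φ : V × V → ℕ, (∀ e ∈ A, φ e < 2) ∧ ∀ u : V, u ≠ v → SatAt A φ u := by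
  classical
  obtain ⟨X, hX⟩ := exists_parity_vector A hS heven v
  have hval : ∀ y : ZMod 2, (y.val = 1 ↔ y = 1) := by decide
  refine ⟨fun e => (X e).val, fun e _ => ZMod.val_lt (X e), ?_⟩
  intro u hu
  obtain ⟨h1, h2⟩ := hX u hu
  constructor
  · intro hne
    refine ⟨1, ?_⟩
    have hsum := h1 hne
    rw [sum_zmod_eq_card_filter] at hsum
    have hfe : ((outCut A u).filter fun e => (X e).val = 1)
        = ((outCut A u).filter fun e => X e = 1) :=
      Finset.filter_congr fun e _ => hval (X e)
    rw [hfe]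
    exact odd_of_natCast_eq_one hsum
  · intro hne
    refine ⟨1, ?_⟩
    have hsum := h2 hne
    rw [sum_zmod_eq_card_filter] at hsum
    have hfe : ((inCut A u).filter fun e => (X e).val = 1)
        = ((inCut A u).filter fun e => X e = 1) :=
      Finset.filter_congr fun e _ => hval (X e)
    rw [hfe]
    exact odd_of_natCast_eq_one hsum
end

section
/- Let D be a digraph and ED the extension of D obtained by blowing up each vertex v_i into an independent set of odd size s_i. Then χ'_wo(ED) = χ'_wo(D). -/
open Finset
open scoped Classical

open WeakOdd

/-!
Only the parities of the colour classes matter. Pulling a colouring of `D` back along the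
projection `ED → D` multiplies each class count at a vertex by odd sizes `s v`, so it stays
weak-odd. Conversely, every digraph has a weak-odd 3-colouring, so only colourings with at most
two colours must be transferred back. Such a colouring is a vector `x` over `ZMod 2` with
`∑ x = 1` on every nonempty even semi-cut; summing `x` over the odd block `I_u × I_v` above each
arc `(u, v)` turns such a vector on `ED` into one on `D`, since the `s u` copies of `u` each
contribute `1`.
-/

namespace WeakOdd

section OddClass

variable {α β : Type*}

def HasOddClass (φ : α → ℕ) (c : Finset α) : Prop :=
  c.Nonempty → ∃ i, Odd (c.filter fun e => φ e = i).card

theorem exists_odd_card_filter_of_odd_card (φ : α → ℕ) {c : Finset α} (hc : Odd c.card) :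
    ∃ i, Odd (c.filter fun e => φ e = i).card := by
  by_contra! h
  rw [card_eq_sum_card_image φ c] at hc
  exact Nat.not_odd_iff_even.2 (even_sum _ fun i _ => Nat.not_odd_iff_even.1 (h i)) hc

theorem hasOddClass_congr {φ ψ : α → ℕ} {c : Finset α} (h : ∀ e ∈ c, φ e = ψ e) :
    HasOddClass φ c ↔ HasOddClass ψ c := by
  have hfilter : ∀ i, (c.filter fun e => φ e = i) = c.filter fun e => ψ e = i :=
    fun i => filter_congr fun e he => by rw [h e he]
  simp only [HasOddClass, hfilter]

theorem sum_cast_eq_card_filter_eq_one {φ : α → ℕ} {c : Finset α}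
    (hφ : ∀ e ∈ c, φ e < 2) :
    ∑ e ∈ c, (φ e : ZMod 2) = (c.filter fun e => φ e = 1).card := by
  rw [natCast_card_filter]
  refine sum_congr rfl fun e he => ?_
  have := hφ e he
  interval_cases φ e <;> simp

theorem hasOddClass_iff_of_lt_two {φ : α → ℕ} {c : Finset α} (hφ : ∀ e ∈ c, φ e < 2) :
    HasOddClass φ c ↔ (c.Nonempty → Even c.card → ∑ e ∈ c, (φ e : ZMod 2) = 1) := by
  rw [sum_cast_eq_card_filter_eq_one hφ, ZMod.natCast_eq_one_iff_odd]
  have hsplit : c.card = (c.filter fun e => φ e = 1).card + (c.filter fun e => φ e = 0).card := by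
    rw [← card_filter_add_card_filter_not (fun e => φ e = 1)]
    congr 2
    exact filter_congr fun e he => by have := hφ e he; omega
  refine ⟨fun h hne heven => ?_, fun h hne => ?_⟩
  · obtain ⟨i, hi⟩ := h hne
    rcases (show i = 0 ∨ i = 1 ∨ 2 ≤ i by omega) with rfl | rfl | _
    · rw [hsplit, Nat.even_add] at heven
      exact Nat.not_even_iff_odd.1 fun h1 => Nat.not_even_iff_odd.2 hi (heven.1 h1)
    · exact hi
    · rw [filter_false_of_mem fun e he => by have := hφ e he; omega] at hi
      simp at hi
  · rcases Nat.even_or_odd c.card with heven | hodd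
    · exact ⟨1, h hne heven⟩
    · exact exists_odd_card_filter_of_odd_card φ hodd

theorem HasOddClass.comp {φ : α → ℕ} {c : Finset α} {c' : Finset β} {π : β → α}
    (h : HasOddClass φ c) (hne : c'.Nonempty → c.Nonempty)
    (hsum : ∀ f : α → ZMod 2, ∑ e ∈ c', f (π e) = ∑ e ∈ c, f e) :
    HasOddClass (φ ∘ π) c' := fun hc' => by
  obtain ⟨i, hi⟩ := h (hne hc')
  refine ⟨i, ?_⟩
  rw [← ZMod.natCast_eq_one_iff_odd, natCast_card_filter] at hi ⊢
  exact (hsum fun e => if φ e = i then 1 else 0).trans hi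

theorem HasOddClass.of_sum_eq {ι : Type*} [Fintype ι] (hι : Odd (Fintype.card ι))
    {φ : α → ℕ} {c : Finset α} (hφ : ∀ e ∈ c, φ e < 2)
    {ψ : β → ℕ} {d : ι → Finset β} (hψ : ∀ i, ∀ e ∈ d i, ψ e < 2)
    (hd : ∀ i, HasOddClass ψ (d i))
    (hne : c.Nonempty → ∀ i, (d i).Nonempty) (heven : Even c.card → ∀ i, Even (d i).card)
    (hsum : ∑ e ∈ c, (φ e : ZMod 2) = ∑ i, ∑ e ∈ d i, (ψ e : ZMod 2)) :
    HasOddClass φ c := by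
  rw [hasOddClass_iff_of_lt_two hφ]
  intro hc hc'
  have hblock i := (hasOddClass_iff_of_lt_two (hψ i)).1 (hd i) (hne hc i) (heven hc' i)
  simp only [hsum, hblock, sum_const, card_univ, nsmul_eq_mul, mul_one,
    ZMod.natCast_eq_one_iff_odd, hι]

end OddClass

section SplitGraph

variable {V : Type*} [DecidableEq V] {A : Finset (V × V)}

/- Semi-cuts are indexed by the vertices of the bipartite split graph on `V ⊕ V`: `inl v` is the
out-semi-cut of `v`, `inr v` its in-semi-cut, and an arc `(u, v)` is the edge `inl u — inr v`. -/
def semicut (A : Finset (V × V)) : V ⊕ V → Finset (V × V) :=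
  Sum.elim (outCut A) (inCut A)

theorem mem_semicut {e : V × V} {z : V ⊕ V} :
    e ∈ semicut A z ↔ e ∈ A ∧ (z = .inl e.1 ∨ z = .inr e.2) := by
  cases z <;> simp [semicut, outCut, inCut, eq_comm]

theorem isWOColoring_iff {k : ℕ} {φ : V × V → ℕ} :
    IsWOColoring A k φ ↔ (∀ e ∈ A, φ e < k) ∧ ∀ z, HasOddClass φ (semicut A z) := by
  simp only [IsWOColoring, SatAt, HasOddClass, Sum.forall, semicut, Sum.elim_inl, Sum.elim_inr,
    forall_and]

def SplitAdj (A : Finset (V × V)) (z z' : V ⊕ V) : Prop :=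
  ∃ e ∈ A, (z = .inl e.1 ∧ z' = .inr e.2) ∨ (z = .inr e.2 ∧ z' = .inl e.1)

theorem reflTransGen_splitAdj_of_mem_semicut {e : V × V} {z z' : V ⊕ V}
    (h : e ∈ semicut A z) (h' : e ∈ semicut A z') :
    Relation.ReflTransGen (SplitAdj A) z z' := by
  rw [mem_semicut] at h h'
  obtain ⟨he, rfl | rfl⟩ := h <;> obtain ⟨-, rfl | rfl⟩ := h'
  exacts [.refl, .single ⟨e, he, .inl ⟨rfl, rfl⟩⟩, .single ⟨e, he, .inr ⟨rfl, rfl⟩⟩,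
    .refl]

def boundary (A : Finset (V × V)) (x : V × V → ZMod 2) (z : V ⊕ V) : ZMod 2 :=
  ∑ e ∈ semicut A z, x e

theorem boundary_add (x y : V × V → ZMod 2) :
    boundary A (x + y) = boundary A x + boundary A y := by
  ext z
  exact sum_add_distrib

theorem boundary_single {e : V × V} (he : e ∈ A) :
    boundary A (Pi.single e 1) = Pi.single (.inl e.1) 1 + Pi.single (.inr e.2) 1 := by
  ext z
  rw [boundary, sum_pi_single']
  by_cases h₁ : z = .inl e.1 <;> by_cases h₂ : z = .inr e.2 <;>
    simp_all [mem_semicut]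

theorem exists_boundary_eq_of_reflTransGen {z z' : V ⊕ V}
    (h : Relation.ReflTransGen (SplitAdj A) z z') :
    ∃ x, boundary A x = Pi.single z 1 + Pi.single z' 1 := by
  induction h with
  | refl => exact ⟨0, by ext; simp [boundary, CharTwo.add_self_eq_zero]⟩
  | @tail b c _ hbc ih =>
    obtain ⟨x, hx⟩ := ih
    obtain ⟨e, he, hbc⟩ := hbc
    have hstep : boundary A (Pi.single e 1) = Pi.single b 1 + Pi.single c 1 := by
      rcases hbc with ⟨rfl, rfl⟩ | ⟨rfl, rfl⟩
      exacts [boundary_single he, (boundary_single he).trans (add_comm _ _)]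
    refine ⟨x + Pi.single e 1, ?_⟩
    ext u
    simp only [boundary_add, hx, hstep, Pi.add_apply, add_assoc, CharTwo.add_cancel_left]

def Defective (A : Finset (V × V)) (x : V × V → ZMod 2) (z : V ⊕ V) : Prop :=
  (semicut A z).Nonempty ∧ Even (semicut A z).card ∧ boundary A x z = 0

variable [Fintype V]

/- Take `x` with the fewest defective semi-cuts: adding a vector with boundary `δ z + δ z'` along
a path between two defective semi-cuts `z`, `z'` would repair both. -/
theorem exists_eq_of_defective_of_reflTransGen (A : Finset (V × V)) :
    ∃ x : V × V → ZMod 2, ∀ z z', Defective A x z → Defective A x z' →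
      Relation.ReflTransGen (SplitAdj A) z z' → z = z' := by
  obtain ⟨x, -, hmin⟩ := exists_min_image univ
    (fun x => (univ.filter (Defective A x)).card) univ_nonempty
  refine ⟨x, fun z z' hz hz' hzz' => by_contra fun hne => ?_⟩
  obtain ⟨w, hw⟩ := exists_boundary_eq_of_reflTransGen hzz'
  have hsub : univ.filter (Defective A (x + w)) ⊆ (univ.filter (Defective A x)).erase z := by
    intro u hu
    simp only [mem_filter, mem_univ, true_and, mem_erase] at hu ⊢
    obtain ⟨hne, heven, hu⟩ := hu
    rw [boundary_add, hw] at hu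
    by_cases huz : u = z
    · subst huz
      simp [hne, hz.2.2] at hu
    by_cases huz' : u = z'
    · subst huz'
      simp [Ne.symm hne, hz'.2.2] at hu
    simp only [Pi.add_apply, Pi.single_apply, huz, huz', if_false, add_zero] at hu
    exact ⟨huz, hne, heven, hu⟩
  have := (card_le_card hsub).trans_lt (card_erase_lt_of_mem (by simpa using hz))
  exact (hmin (x + w) (mem_univ _)).not_gt this

/- Each defect of the 2-colouring `x` gets one arc of a third colour; such an arc is alone in its
colour at both of its ends, because distinct defects lie in distinct components. -/
theorem exists_isWOColoring_three (A : Finset (V × V)) : ∃ φ, IsWOColoring A 3 φ := by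
  obtain ⟨x, hx⟩ := exists_eq_of_defective_of_reflTransGen A
  choose f hf using fun z (hz : Defective A x z) => hz.1
  set φ : V × V → ℕ := fun e => if ∃ z hz, f z hz = e then 2 else (x e).val with hφ
  refine ⟨φ, isWOColoring_iff.2 ⟨fun e _ => ?_, fun u => ?_⟩⟩
  · have := ZMod.val_lt (x e)
    simp only [hφ]
    split_ifs <;> omega
  by_cases hu : ∃ z hz, f z hz ∈ semicut A u
  · obtain ⟨z, hz, hzu⟩ := hu
    have hclass : (semicut A u).filter (fun e => φ e = 2) = {f z hz} := by
      ext e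
      simp only [mem_filter, mem_singleton, hφ]
      refine ⟨fun ⟨he, he2⟩ => ?_, fun h => h ▸ ⟨hzu, if_pos ⟨z, hz, rfl⟩⟩⟩
      split_ifs at he2 with hF
      · obtain ⟨z', hz', rfl⟩ := hF
        obtain rfl := hx z z' hz hz' ((reflTransGen_splitAdj_of_mem_semicut (hf z hz) hzu).trans
          (reflTransGen_splitAdj_of_mem_semicut he (hf z' hz')))
        rfl
      · exact absurd he2 (ZMod.val_lt (x e)).ne
    exact fun _ => ⟨2, by rw [hclass, card_singleton]; exact odd_one⟩
  have hφx : ∀ e ∈ semicut A u, φ e = (x e).val :=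
    fun e he => if_neg fun ⟨z, hz, hze⟩ => hu ⟨z, hz, hze ▸ he⟩
  rw [hasOddClass_congr hφx, hasOddClass_iff_of_lt_two fun e _ => ZMod.val_lt (x e)]
  intro hne heven
  simp only [ZMod.natCast_val, ZMod.cast_id', id]
  by_contra hne1
  exact hu ⟨u, ⟨hne, heven, (by decide : ∀ a : ZMod 2, a ≠ 1 → a = 0) _ hne1⟩, hf u _⟩

end SplitGraph

section Blowup

variable {W : Type*} [Fintype W] [DecidableEq W] (A : Finset (W × W)) (s : W → ℕ)

theorem sum_outCut_blowup {M : Type*} [AddCommMonoid M] (a : Σ w, Fin (s w))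
    (g : (Σ w, Fin (s w)) × (Σ w, Fin (s w)) → M) :
    ∑ e ∈ outCut (blowup A s) a, g e =
      ∑ e ∈ outCut A a.1, ∑ j : Fin (s e.2), g (a, ⟨e.2, j⟩) := by
  rw [sum_sigma']
  refine sum_nbij' (fun e => ⟨(a.1, e.2.1), e.2.2⟩) (fun p => (a, ⟨p.1.2, p.2⟩))
    ?_ ?_ ?_ ?_ ?_
  all_goals simp +contextual [outCut, blowup, Prod.ext_iff, Sigma.forall, Prod.forall]
  all_goals intros; subst_vars; assumption

theorem sum_inCut_blowup {M : Type*} [AddCommMonoid M] (b : Σ w, Fin (s w))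
    (g : (Σ w, Fin (s w)) × (Σ w, Fin (s w)) → M) :
    ∑ e ∈ inCut (blowup A s) b, g e =
      ∑ e ∈ inCut A b.1, ∑ i : Fin (s e.1), g (⟨e.1, i⟩, b) := by
  rw [sum_sigma']
  refine sum_nbij' (fun e => ⟨(e.1.1, b.1), e.1.2⟩) (fun p => (⟨p.1.1, p.2⟩, b))
    ?_ ?_ ?_ ?_ ?_
  all_goals simp +contextual [inCut, blowup, Prod.ext_iff, Sigma.forall, Prod.forall]
  all_goals intros; subst_vars; assumption

def blockSum (ψ : (Σ w, Fin (s w)) × (Σ w, Fin (s w)) → ZMod 2) (e : W × W) : ZMod 2 :=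
  ∑ i : Fin (s e.1), ∑ j : Fin (s e.2), ψ (⟨e.1, i⟩, ⟨e.2, j⟩)

theorem sum_outCut_blockSum (u : W) (ψ : (Σ w, Fin (s w)) × (Σ w, Fin (s w)) → ZMod 2) :
    ∑ e ∈ outCut A u, blockSum s ψ e =
      ∑ i : Fin (s u), ∑ e ∈ outCut (blowup A s) ⟨u, i⟩, ψ e := by
  simp only [sum_outCut_blowup]
  rw [sum_comm]
  refine sum_congr rfl fun e he => ?_
  rcases e with ⟨u', v⟩
  obtain rfl : u' = u := (mem_filter.1 he).2
  rfl

theorem sum_inCut_blockSum (v : W) (ψ : (Σ w, Fin (s w)) × (Σ w, Fin (s w)) → ZMod 2) :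
    ∑ e ∈ inCut A v, blockSum s ψ e =
      ∑ j : Fin (s v), ∑ e ∈ inCut (blowup A s) ⟨v, j⟩, ψ e := by
  simp only [sum_inCut_blowup]
  rw [sum_comm]
  refine sum_congr rfl fun e he => ?_
  rcases e with ⟨u, v'⟩
  obtain rfl : v' = v := (mem_filter.1 he).2
  exact sum_comm

variable {s} (hodd : ∀ w, Odd (s w))
include hodd

theorem outCut_blowup_nonempty_iff (a : Σ w, Fin (s w)) :
    (outCut (blowup A s) a).Nonempty ↔ (outCut A a.1).Nonempty := by
  rw [← card_pos, card_eq_sum_ones, sum_outCut_blowup]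
  simp only [sum_const, card_univ, Fintype.card_fin, smul_eq_mul, mul_one, sum_pos_iff]
  exact ⟨fun ⟨e, he, _⟩ => ⟨e, he⟩, fun ⟨e, he⟩ => ⟨e, he, (hodd _).pos⟩⟩

theorem inCut_blowup_nonempty_iff (b : Σ w, Fin (s w)) :
    (inCut (blowup A s) b).Nonempty ↔ (inCut A b.1).Nonempty := by
  rw [← card_pos, card_eq_sum_ones, sum_inCut_blowup]
  simp only [sum_const, card_univ, Fintype.card_fin, smul_eq_mul, mul_one, sum_pos_iff]
  exact ⟨fun ⟨e, he, _⟩ => ⟨e, he⟩, fun ⟨e, he⟩ => ⟨e, he, (hodd _).pos⟩⟩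

theorem sum_outCut_blowup_comp (a : Σ w, Fin (s w)) (f : W × W → ZMod 2) :
    ∑ e ∈ outCut (blowup A s) a, f (e.1.1, e.2.1) = ∑ e ∈ outCut A a.1, f e := by
  rw [sum_outCut_blowup]
  refine sum_congr rfl fun e he => ?_
  simp only [sum_const, card_univ, Fintype.card_fin, nsmul_eq_mul,
    ZMod.natCast_eq_one_iff_odd.2 (hodd _), one_mul]
  rw [← (mem_filter.1 he).2]

theorem sum_inCut_blowup_comp (b : Σ w, Fin (s w)) (f : W × W → ZMod 2) :
    ∑ e ∈ inCut (blowup A s) b, f (e.1.1, e.2.1) = ∑ e ∈ inCut A b.1, f e := by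
  rw [sum_inCut_blowup]
  refine sum_congr rfl fun e he => ?_
  simp only [sum_const, card_univ, Fintype.card_fin, nsmul_eq_mul,
    ZMod.natCast_eq_one_iff_odd.2 (hodd _), one_mul]
  rw [← (mem_filter.1 he).2]

theorem even_card_outCut_blowup_iff (a : Σ w, Fin (s w)) :
    Even (outCut (blowup A s) a).card ↔ Even (outCut A a.1).card := by
  have := sum_outCut_blowup_comp A hodd a fun _ => 1
  simp only [← ZMod.natCast_eq_zero_iff_even, cast_card, this]

theorem even_card_inCut_blowup_iff (b : Σ w, Fin (s w)) :
    Even (inCut (blowup A s) b).card ↔ Even (inCut A b.1).card := by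
  have := sum_inCut_blowup_comp A hodd b fun _ => 1
  simp only [← ZMod.natCast_eq_zero_iff_even, cast_card, this]

theorem IsWOColoring.toBlowup {k : ℕ} {φ : W × W → ℕ} (h : IsWOColoring A k φ) :
    IsWOColoring (blowup A s) k fun e => φ (e.1.1, e.2.1) :=
  let π (e : (Σ w, Fin (s w)) × (Σ w, Fin (s w))) : W × W := (e.1.1, e.2.1)
  ⟨fun _ he => h.1 _ (mem_filter.1 he).2, fun a =>
    ⟨HasOddClass.comp (π := π) (h.2 a.1).1
      (outCut_blowup_nonempty_iff A hodd a).1 (sum_outCut_blowup_comp A hodd a),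
     HasOddClass.comp (π := π) (h.2 a.1).2
      (inCut_blowup_nonempty_iff A hodd a).1 (sum_inCut_blowup_comp A hodd a)⟩⟩

theorem IsWOColoring.ofBlowup {k : ℕ} {ψ : (Σ w, Fin (s w)) × (Σ w, Fin (s w)) → ℕ}
    (h : IsWOColoring (blowup A s) k ψ) (hk : k ≤ 2) :
    IsWOColoring A k fun e => (blockSum s (fun e' => (ψ e' : ZMod 2)) e).val := by
  have hψ : ∀ e ∈ blowup A s, ψ e < 2 := fun e he => (h.1 e he).trans_le hk
  have hcard (w : W) : Odd (Fintype.card (Fin (s w))) := by simpa using hodd w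
  refine ⟨fun e he => ?_, fun u => ⟨?_, ?_⟩⟩
  · obtain rfl | hk := hk.eq_or_lt
    · exact ZMod.val_lt _
    -- for `k = 1` every block is coloured `0`, and so is its sum
    have hmem (i : Fin (s e.1)) (j : Fin (s e.2)) :
        (⟨⟨e.1, i⟩, ⟨e.2, j⟩⟩ : (Σ w, Fin (s w)) × _) ∈ blowup A s :=
      mem_filter.2 ⟨mem_univ _, he⟩
    have hzero : blockSum s (fun e' => (ψ e' : ZMod 2)) e = 0 :=
      sum_eq_zero fun i _ => sum_eq_zero fun j _ => by
        have hψ0 : ψ (⟨e.1, i⟩, ⟨e.2, j⟩) = 0 := by have := h.1 _ (hmem i j); omega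
        simp [hψ0]
    have := h.1 _ (hmem ⟨0, (hodd _).pos⟩ ⟨0, (hodd _).pos⟩)
    dsimp only
    rw [hzero, ZMod.val_zero]
    omega
  · refine HasOddClass.of_sum_eq (d := fun i => outCut (blowup A s) ⟨u, i⟩) (hcard u)
      (fun e _ => ZMod.val_lt _) (fun i e he => hψ e (mem_filter.1 he).1)
      (fun i => (h.2 ⟨u, i⟩).1)
      (fun hne i => (outCut_blowup_nonempty_iff A hodd _).2 hne)
      (fun heven i => (even_card_outCut_blowup_iff A hodd _).2 heven) ?_
    simp only [ZMod.natCast_val, ZMod.cast_id', id, sum_outCut_blockSum]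
  · refine HasOddClass.of_sum_eq (d := fun i => inCut (blowup A s) ⟨u, i⟩) (hcard u)
      (fun e _ => ZMod.val_lt _) (fun i e he => hψ e (mem_filter.1 he).1)
      (fun i => (h.2 ⟨u, i⟩).2)
      (fun hne i => (inCut_blowup_nonempty_iff A hodd _).2 hne)
      (fun heven i => (even_card_inCut_blowup_iff A hodd _).2 heven) ?_
    simp only [ZMod.natCast_val, ZMod.cast_id', id, sum_inCut_blockSum]

end Blowup

end WeakOdd

theorem blowup_odd_index_general {W : Type*} [Fintype W] [DecidableEq W]
    (A : Finset (W × W))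
    (s : W → ℕ) (hodd : ∀ w : W, Odd (s w)) :
    woIndex (blowup A s) = woIndex A := by
  have hcol (k : ℕ) :
      (∃ ψ, IsWOColoring (blowup A s) k ψ) ↔ ∃ φ, IsWOColoring A k φ := by
    refine ⟨fun ⟨ψ, hψ⟩ => ?_, fun ⟨φ, hφ⟩ => ⟨_, hφ.toBlowup A hodd⟩⟩
    rcases le_or_gt k 2 with hk | hk
    · exact ⟨_, hψ.ofBlowup A hodd hk⟩
    · obtain ⟨φ, hφ⟩ := exists_isWOColoring_three A
      exact ⟨φ, fun e he => (hφ.1 e he).trans_le hk, hφ.2⟩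
  simp only [woIndex, hcol]

/-- Blowing up each vertex of a digraph into an independent set of odd size does not
change the weak-odd chromatic index. -/
theorem blowup_odd_index {W : Type*} [Fintype W] [DecidableEq W]
    (A : Finset (W × W)) (hloop : ∀ w : W, (w, w) ∉ A)
    (s : W → ℕ) (hodd : ∀ w : W, Odd (s w)) :
    woIndex (blowup A s) = woIndex A :=
  blowup_odd_index_general A s hodd
end

section
/- Let ET be an extended tournament on q vertices obtained by blowing up the vertices of a tournament T into independent sets I_1,...,I_n of sizes s_1,...,s_n. Then the set V_2 = {vertices of PS(ET) not in V_1 with even degree in PS(ET)} has even cardinality. -/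
open Finset
open scoped Classical

open WeakOdd

/-- For an extended tournament, the set V₂ of partial-split vertices (halves of
vertices outside V₁ having even degree) has even cardinality. -/
theorem extended_tournament_V2_even {W : Type*} [Fintype W] [DecidableEq W]
    (A : Finset (W × W)) (hT : IsTournament A)
    (s : W → ℕ) (hs : ∀ w : W, 1 ≤ s w) :
    Even ((Finset.univ.filter fun u : Σ w, Fin (s w) =>
        ¬ (Odd (outCut (blowup A s) u).card ∧ Odd (inCut (blowup A s) u).card) ∧
          Even (outCut (blowup A s) u).card).card +
      (Finset.univ.filter fun u : Σ w, Fin (s w) =>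
        ¬ (Odd (outCut (blowup A s) u).card ∧ Odd (inCut (blowup A s) u).card) ∧
          Even (inCut (blowup A s) u).card).card) := by
  classical
  set B := blowup A s with hB
  have h2 : ∀ n : ℕ, (n : ZMod 2) = if Even n then 0 else 1 := by
    intro n
    rcases Nat.even_or_odd n with h | h
    · simp [h, (ZMod.natCast_eq_zero_iff n 2).2 h.two_dvd]
    · obtain ⟨m, hm⟩ := h
      subst hm
      rw [if_neg (Nat.not_even_iff_odd.2 ⟨m, rfl⟩)]
      push_cast
      rw [show ((2 : ZMod 2)) = 0 from by decide]
      ring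
  have main : (((Finset.univ.filter fun u : Σ w, Fin (s w) =>
        ¬ (Odd (outCut B u).card ∧ Odd (inCut B u).card) ∧
          Even (outCut B u).card).card +
      (Finset.univ.filter fun u : Σ w, Fin (s w) =>
        ¬ (Odd (outCut B u).card ∧ Odd (inCut B u).card) ∧
          Even (inCut B u).card).card : ℕ) : ZMod 2) = 0 := by
    push_cast [Finset.card_filter]
    rw [← Finset.sum_add_distrib]
    have step : ∀ u : Σ w, Fin (s w),
        ((if ¬ (Odd (outCut B u).card ∧ Odd (inCut B u).card) ∧
            Even (outCut B u).card then (1 : ZMod 2) else 0) +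
         (if ¬ (Odd (outCut B u).card ∧ Odd (inCut B u).card) ∧
            Even (inCut B u).card then (1 : ZMod 2) else 0))
        = ((outCut B u).card : ZMod 2) + ((inCut B u).card : ZMod 2) := by
      intro u
      rcases Nat.even_or_odd (outCut B u).card with ho1 | ho1 <;>
        rcases Nat.even_or_odd (inCut B u).card with hi1 | hi1 <;>
          simp [h2, ho1, hi1, Nat.not_even_iff_odd.2, Nat.not_odd_iff_even.2] <;> decide
    rw [Finset.sum_congr rfl fun u _ => step u, Finset.sum_add_distrib]
    have hsum_o : (∑ u : Σ w, Fin (s w), (outCut B u).card) = B.card :=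
      (Finset.card_eq_sum_card_fiberwise (f := Prod.fst) (fun x _ => Finset.mem_univ _)).symm
    have hsum_i : (∑ u : Σ w, Fin (s w), (inCut B u).card) = B.card :=
      (Finset.card_eq_sum_card_fiberwise (f := Prod.snd) (fun x _ => Finset.mem_univ _)).symm
    rw [← Nat.cast_sum, ← Nat.cast_sum, hsum_o, hsum_i]
    exact CharTwo.add_self_eq_zero _
  exact even_iff_two_dvd.2 ((ZMod.natCast_eq_zero_iff _ 2).1 main)
end

section
/- If T is a tournament on at most 3 vertices, then every extended tournament ET obtained from T satisfies χ'_wo(ET) ≤ 2. -/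
open Finset
open scoped Classical

open WeakOdd

namespace MySmallTournament

variable {W : Type*} [Fintype W] [DecidableEq W]

lemma four_le_card {a b c d : W} (hab : a ≠ b) (hac : a ≠ c) (had : a ≠ d)
    (hbc : b ≠ c) (hbd : b ≠ d) (hcd : c ≠ d) : 4 ≤ Fintype.card W := by
  have h : ({a, b, c, d} : Finset W).card = 4 := by
    rw [Finset.card_insert_of_notMem (by simp [hab, hac, had]),
      Finset.card_insert_of_notMem (by simp [hbc, hbd]),
      Finset.card_insert_of_notMem (by simp [hcd]), Finset.card_singleton]
  calc 4 = ({a, b, c, d} : Finset W).card := h.symm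
    _ ≤ (Finset.univ : Finset W).card := Finset.card_le_univ _
    _ = Fintype.card W := Finset.card_univ

lemma tasym {A : Finset (W × W)} (hT : IsTournament A) {a b : W}
    (h1 : (a, b) ∈ A) (h2 : (b, a) ∈ A) : False := by
  by_cases hab : a = b
  · exact hT.1 a (hab ▸ h1)
  · exact ((hT.2 a b hab).mp h1) h2

lemma ttotal {A : Finset (W × W)} (hT : IsTournament A) {a b : W} (hab : a ≠ b) :
    (a, b) ∈ A ∨ (b, a) ∈ A := by
  by_cases h : (a, b) ∈ A
  · exact Or.inl h
  · exact Or.inr ((hT.2 b a hab.symm).mpr h)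

lemma sigma_mk_eq {s : W → ℕ} {b v : W} {jb : Fin (s b)} {k : Fin (s v)}
    (h : b = v) (h2 : (jb : ℕ) = (k : ℕ)) :
    (⟨b, jb⟩ : Σ w, Fin (s w)) = ⟨v, k⟩ := by
  subst h
  exact congrArg (Sigma.mk b) (Fin.ext h2)

/-- The coloring: arc from copy `(u,i)` to copy `(v,j)` gets color
`x(u,v)·[i=0] + y(u,v)·[j=0] mod 2` where `x = 1` iff `u,v` have no common
in-neighbor and `y = 1` iff they have no common out-neighbor. -/
noncomputable def phi (A : Finset (W × W)) (s : W → ℕ)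
    (e : (Σ w, Fin (s w)) × (Σ w, Fin (s w))) : ℕ :=
  ((if ∃ w, (w, e.1.1) ∈ A ∧ (w, e.2.1) ∈ A then 0 else 1) *
      (if (e.1.2 : ℕ) = 0 then 1 else 0) +
    (if ∃ w, (e.1.1, w) ∈ A ∧ (e.2.1, w) ∈ A then 0 else 1) *
      (if (e.2.2 : ℕ) = 0 then 1 else 0)) % 2

lemma out_ok (A : Finset (W × W)) (hT : IsTournament A) (hcard : Fintype.card W ≤ 3)
    (s : W → ℕ) (hs : ∀ w : W, 1 ≤ s w) (u : W) (i : Fin (s u))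
    (hne : (outCut (blowup A s) (⟨u, i⟩ : Σ w, Fin (s w))).Nonempty) :
    ∃ c, Odd (((outCut (blowup A s) (⟨u, i⟩ : Σ w, Fin (s w))).filter
      fun e => phi A s e = c).card) := by
  obtain ⟨e0, he0⟩ := hne
  rw [outCut, mem_filter] at he0
  obtain ⟨hbl0, hfst0⟩ := he0
  rw [blowup, mem_filter] at hbl0
  have hv' : (u, e0.2.1) ∈ A := by
    have h1 : e0.1.fst = u := by rw [hfst0]
    rw [← h1]; exact hbl0.2
  obtain ⟨v, hv⟩ : ∃ v, (u, v) ∈ A := ⟨_, hv'⟩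
  -- find an out-neighbor v₀ with no common out-neighbor with u
  have hex : ∃ v₀, (u, v₀) ∈ A ∧ ∀ t, ¬((u, t) ∈ A ∧ (v₀, t) ∈ A) := by
    by_cases h : ∀ t, ¬((u, t) ∈ A ∧ (v, t) ∈ A)
    · exact ⟨v, hv, h⟩
    · push_neg at h
      obtain ⟨w, hw1, hw2⟩ := h
      refine ⟨w, hw1, ?_⟩
      rintro t ⟨ht1, ht2⟩
      have h1 : u ≠ v := fun h => hT.1 v (h ▸ hv)
      have h2 : u ≠ w := fun h => hT.1 w (h ▸ hw1)
      have h3 : u ≠ t := fun h => hT.1 t (h ▸ ht1)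
      have h4 : v ≠ w := fun h => hT.1 w (h ▸ hw2)
      have h5 : v ≠ t := fun h => tasym hT hw2 (h ▸ ht2)
      have h6 : w ≠ t := fun h => hT.1 t (h ▸ ht2)
      exact absurd (four_le_card h1 h2 h3 h4 h5 h6) (by omega)
  obtain ⟨v₀, hv₀, hy₀⟩ := hex
  have hY₀ : ¬∃ t, (u, t) ∈ A ∧ (v₀, t) ∈ A := fun ⟨t, ht⟩ => hy₀ t ht
  -- the "x" value is the same for all out-neighbors of u
  have hxeq : ∀ b, (u, b) ∈ A →
      ((if ∃ w, (w, u) ∈ A ∧ (w, b) ∈ A then (0 : ℕ) else 1) =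
        if ∃ w, (w, u) ∈ A ∧ (w, v₀) ∈ A then 0 else 1) := by
    intro b hb
    by_cases hbv : b = v₀
    · subst hbv; rfl
    · have hnb : ¬∃ w, (w, u) ∈ A ∧ (w, b) ∈ A := by
        rintro ⟨w, hw1, hw2⟩
        have h1 : u ≠ b := fun h => hT.1 b (h ▸ hb)
        have h2 : u ≠ v₀ := fun h => hT.1 v₀ (h ▸ hv₀)
        have h3 : u ≠ w := fun h => hT.1 w (h ▸ hw1)
        have h5 : b ≠ w := fun h => hT.1 w (h ▸ hw2)
        have h6 : v₀ ≠ w := fun h => tasym hT hv₀ (h ▸ hw1)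
        exact absurd (four_le_card h1 h2 h3 hbv h5 h6) (by omega)
      have hnv : ¬∃ w, (w, u) ∈ A ∧ (w, v₀) ∈ A := by
        rintro ⟨w, hw1, hw2⟩
        have h1 : u ≠ b := fun h => hT.1 b (h ▸ hb)
        have h2 : u ≠ v₀ := fun h => hT.1 v₀ (h ▸ hv₀)
        have h3 : u ≠ w := fun h => hT.1 w (h ▸ hw1)
        have h5 : b ≠ w := fun h => tasym hT hb (h.symm ▸ hw1)
        have h6 : v₀ ≠ w := fun h => hT.1 w (h ▸ hw2)
        exact absurd (four_le_card h1 h2 h3 hbv h5 h6) (by omega)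
      simp [hnb, hnv]
  refine ⟨((if ∃ w, (w, u) ∈ A ∧ (w, v₀) ∈ A then (0 : ℕ) else 1) *
      (if (i : ℕ) = 0 then 1 else 0) + 1) % 2, ?_⟩
  have hset : ((outCut (blowup A s) (⟨u, i⟩ : Σ w, Fin (s w))).filter
      fun e => phi A s e = ((if ∃ w, (w, u) ∈ A ∧ (w, v₀) ∈ A then (0 : ℕ) else 1) *
        (if (i : ℕ) = 0 then 1 else 0) + 1) % 2)
      = {((⟨u, i⟩ : Σ w, Fin (s w)), (⟨v₀, ⟨0, hs v₀⟩⟩ : Σ w, Fin (s w)))} := by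
    ext e
    obtain ⟨e1, e2⟩ := e
    simp only [outCut, blowup, mem_filter, mem_univ, true_and, mem_singleton,
      Prod.mk.injEq]
    constructor
    · rintro ⟨⟨hab, rfl⟩, hphi⟩
      obtain ⟨b, jb⟩ := e2
      have hab : (u, b) ∈ A := hab
      simp only [phi] at hphi
      rw [hxeq b hab] at hphi
      have hkey : (¬∃ w, (u, w) ∈ A ∧ (b, w) ∈ A) ∧ (jb : ℕ) = 0 := by
        by_cases hX : ∃ w, (w, u) ∈ A ∧ (w, v₀) ∈ A <;>
          by_cases hi : (i : ℕ) = 0 <;>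
          by_cases hY : ∃ w, (u, w) ∈ A ∧ (b, w) ∈ A <;>
          by_cases hj : (jb : ℕ) = 0 <;>
          simp [hX, hi, hY, hj] at hphi ⊢
      obtain ⟨hYb1, hjb0⟩ := hkey
      have hbv : b = v₀ := by
        by_contra hb
        rcases ttotal hT hb with h | h
        · exact hYb1 ⟨v₀, hv₀, h⟩
        · exact hy₀ b ⟨hab, h⟩
      exact ⟨rfl, sigma_mk_eq hbv hjb0⟩
    · rintro ⟨rfl, rfl⟩
      refine ⟨⟨hv₀, rfl⟩, ?_⟩
      simp only [phi]
      rw [if_neg hY₀]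
      simp
  rw [hset, card_singleton]
  exact ⟨0, by norm_num⟩

lemma in_ok (A : Finset (W × W)) (hT : IsTournament A) (hcard : Fintype.card W ≤ 3)
    (s : W → ℕ) (hs : ∀ w : W, 1 ≤ s w) (v : W) (j : Fin (s v))
    (hne : (inCut (blowup A s) (⟨v, j⟩ : Σ w, Fin (s w))).Nonempty) :
    ∃ c, Odd (((inCut (blowup A s) (⟨v, j⟩ : Σ w, Fin (s w))).filter
      fun e => phi A s e = c).card) := by
  obtain ⟨e0, he0⟩ := hne
  rw [inCut, mem_filter] at he0
  obtain ⟨hbl0, hsnd0⟩ := he0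
  rw [blowup, mem_filter] at hbl0
  have hu' : (e0.1.1, v) ∈ A := by
    have h1 : e0.2.fst = v := by rw [hsnd0]
    rw [← h1]; exact hbl0.2
  obtain ⟨u, hu⟩ : ∃ u, (u, v) ∈ A := ⟨_, hu'⟩
  -- find an in-neighbor u₀ with no common in-neighbor with v
  have hex : ∃ u₀, (u₀, v) ∈ A ∧ ∀ t, ¬((t, u₀) ∈ A ∧ (t, v) ∈ A) := by
    by_cases h : ∀ t, ¬((t, u) ∈ A ∧ (t, v) ∈ A)
    · exact ⟨u, hu, h⟩
    · push_neg at h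
      obtain ⟨w, hw1, hw2⟩ := h
      refine ⟨w, hw2, ?_⟩
      rintro t ⟨ht1, ht2⟩
      have h1 : u ≠ v := fun h => hT.1 v (h ▸ hu)
      have h2 : u ≠ w := fun h => hT.1 u (h.symm ▸ hw1)
      have h3 : u ≠ t := fun h => tasym hT hw1 (h ▸ ht1)
      have h4 : v ≠ w := fun h => hT.1 v (h.symm ▸ hw2)
      have h5 : v ≠ t := fun h => hT.1 v (h.symm ▸ ht2)
      have h6 : w ≠ t := fun h => hT.1 w (h.symm ▸ ht1)
      exact absurd (four_le_card h1 h2 h3 h4 h5 h6) (by omega)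
  obtain ⟨u₀, hu₀, hx₀⟩ := hex
  have hX₀ : ¬∃ t, (t, u₀) ∈ A ∧ (t, v) ∈ A := fun ⟨t, ht⟩ => hx₀ t ht
  -- the "y" value is the same for all in-neighbors of v
  have hyeq : ∀ a, (a, v) ∈ A →
      ((if ∃ w, (a, w) ∈ A ∧ (v, w) ∈ A then (0 : ℕ) else 1) =
        if ∃ w, (u₀, w) ∈ A ∧ (v, w) ∈ A then 0 else 1) := by
    intro a ha
    by_cases hau : a = u₀
    · subst hau; rfl
    · have hna : ¬∃ w, (a, w) ∈ A ∧ (v, w) ∈ A := by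
        rintro ⟨w, hw1, hw2⟩
        have h1 : a ≠ u₀ := hau
        have h2 : a ≠ v := fun h => hT.1 v (h ▸ ha)
        have h3 : a ≠ w := fun h => hT.1 w (h ▸ hw1)
        have h4 : u₀ ≠ v := fun h => hT.1 v (h ▸ hu₀)
        have h5 : u₀ ≠ w := fun h => tasym hT hu₀ (h ▸ hw2)
        have h6 : v ≠ w := fun h => hT.1 w (h ▸ hw2)
        exact absurd (four_le_card h1 h2 h3 h4 h5 h6) (by omega)
      have hnu : ¬∃ w, (u₀, w) ∈ A ∧ (v, w) ∈ A := by
        rintro ⟨w, hw1, hw2⟩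
        have h1 : a ≠ u₀ := hau
        have h2 : a ≠ v := fun h => hT.1 v (h ▸ ha)
        have h3 : a ≠ w := fun h => tasym hT ha (h.symm ▸ hw2)
        have h4 : u₀ ≠ v := fun h => hT.1 v (h ▸ hu₀)
        have h5 : u₀ ≠ w := fun h => hT.1 w (h ▸ hw1)
        have h6 : v ≠ w := fun h => hT.1 w (h ▸ hw2)
        exact absurd (four_le_card h1 h2 h3 h4 h5 h6) (by omega)
      simp [hna, hnu]
  refine ⟨(1 + (if ∃ w, (u₀, w) ∈ A ∧ (v, w) ∈ A then (0 : ℕ) else 1) *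
      (if (j : ℕ) = 0 then 1 else 0)) % 2, ?_⟩
  have hset : ((inCut (blowup A s) (⟨v, j⟩ : Σ w, Fin (s w))).filter
      fun e => phi A s e = (1 + (if ∃ w, (u₀, w) ∈ A ∧ (v, w) ∈ A then (0 : ℕ) else 1) *
        (if (j : ℕ) = 0 then 1 else 0)) % 2)
      = {((⟨u₀, ⟨0, hs u₀⟩⟩ : Σ w, Fin (s w)), (⟨v, j⟩ : Σ w, Fin (s w)))} := by
    ext e
    obtain ⟨e1, e2⟩ := e
    simp only [inCut, blowup, mem_filter, mem_univ, true_and, mem_singleton,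
      Prod.mk.injEq]
    constructor
    · rintro ⟨⟨hab, rfl⟩, hphi⟩
      obtain ⟨a, ia⟩ := e1
      have hab : (a, v) ∈ A := hab
      simp only [phi] at hphi
      rw [hyeq a hab] at hphi
      have hkey : (¬∃ w, (w, a) ∈ A ∧ (w, v) ∈ A) ∧ (ia : ℕ) = 0 := by
        by_cases hY : ∃ w, (u₀, w) ∈ A ∧ (v, w) ∈ A <;>
          by_cases hj : (j : ℕ) = 0 <;>
          by_cases hX : ∃ w, (w, a) ∈ A ∧ (w, v) ∈ A <;>
          by_cases hi : (ia : ℕ) = 0 <;>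
          simp [hX, hi, hY, hj] at hphi ⊢
      obtain ⟨hXa1, hia0⟩ := hkey
      have hau : a = u₀ := by
        by_contra ha
        rcases ttotal hT ha with h | h
        · exact hx₀ a ⟨h, hab⟩
        · exact hXa1 ⟨u₀, h, hu₀⟩
      exact ⟨sigma_mk_eq hau hia0, rfl⟩
    · rintro ⟨rfl, rfl⟩
      refine ⟨⟨hu₀, rfl⟩, ?_⟩
      simp only [phi]
      rw [if_neg hX₀]
      simp
  rw [hset, card_singleton]
  exact ⟨0, by norm_num⟩

end MySmallTournament

/-- Every extended tournament of a tournament on at most 3 vertices has weak-odd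
chromatic index at most 2. -/
theorem extended_small_tournament {W : Type*} [Fintype W] [DecidableEq W]
    (A : Finset (W × W)) (hT : IsTournament A) (hcard : Fintype.card W ≤ 3)
    (s : W → ℕ) (hs : ∀ w : W, 1 ≤ s w) :
    woIndex (blowup A s) ≤ 2 := by
  apply Nat.sInf_le
  refine ⟨MySmallTournament.phi A s, ?_, ?_⟩
  · intro e _
    simp only [MySmallTournament.phi]
    exact Nat.mod_lt _ (by norm_num)
  · rintro ⟨u, i⟩
    exact ⟨fun hne => MySmallTournament.out_ok A hT hcard s hs u i hne,
      fun hne => MySmallTournament.in_ok A hT hcard s hs u i hne⟩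
end

section
/- If ET is an extended tournament with χ'_wo(ET) = 3, then for any prescribed vertex x of ET, ET admits a 2-arc-coloring such that the weak-odd condition holds at every vertex except possibly x. -/
open Finset
open scoped Classical

open WeakOdd

noncomputable def PhiMap {E C : Type*} [Fintype E] (rows : C → Finset E) (cond : C → Prop) :
    (E → ZMod 2) →ₗ[ZMod 2] (C → ZMod 2) where
  toFun f c := if cond c then ∑ e ∈ rows c, f e else 0
  map_add' f g := by funext c; by_cases h : cond c <;> simp [h, Finset.sum_add_distrib]
  map_smul' r f := by funext c; by_cases h : cond c <;> simp [h, Finset.mul_sum, smul_eq_mul]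

@[simp] lemma PhiMap_apply {E C : Type*} [Fintype E] (rows : C → Finset E) (cond : C → Prop)
    (f : E → ZMod 2) (c : C) :
    PhiMap rows cond f c = if cond c then ∑ e ∈ rows c, f e else 0 := rfl

lemma dual_expand {C : Type*} [Fintype C] [DecidableEq C] (φ : Module.Dual (ZMod 2) (C → ZMod 2)) (y : C → ZMod 2) :
    φ y = ∑ c, y c * φ (Pi.single c 1) := by
  have hy : y = ∑ c, y c • Pi.single c (1 : ZMod 2) := by
    funext j
    rw [Finset.sum_apply]
    simp [Pi.single_apply]
  conv_lhs => rw [hy]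
  rw [map_sum]
  simp [smul_eq_mul]

lemma exists_solution {E C : Type*} [Fintype E] [Fintype C] [DecidableEq E] [DecidableEq C]
    (rows : C → Finset E) (cond : C → Prop)
    (hobstr : ∀ g : C → ZMod 2, (∀ c, ¬ cond c → g c = 0) →
      (∀ e : E, ∑ c, (if e ∈ rows c then g c else 0) = 0) → ∑ c, g c = 0) :
    ∃ f : E → ZMod 2, ∀ c, cond c → ∑ e ∈ rows c, f e = 1 := by
  set t : C → ZMod 2 := fun c => if cond c then 1 else 0 with ht_def
  have ht : t ∈ LinearMap.range (PhiMap rows cond) := by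
    rw [← Subspace.forall_mem_dualAnnihilator_apply_eq_zero_iff]
    intro φ hφ
    rw [Submodule.mem_dualAnnihilator] at hφ
    set g : C → ZMod 2 := fun c => if cond c then φ (Pi.single c 1) else 0 with hg
    have hmask : ∀ c, ¬ cond c → g c = 0 := fun c hc => by simp [hg, hc]
    have hedge : ∀ e : E, ∑ c, (if e ∈ rows c then g c else 0) = 0 := by
      intro e
      have h0 : φ (PhiMap rows cond (Pi.single e 1)) = 0 := hφ _ ⟨_, rfl⟩
      rw [dual_expand] at h0
      have hcg : (∑ c, (if e ∈ rows c then g c else 0)) =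
          ∑ c, (PhiMap rows cond (Pi.single e 1)) c * φ (Pi.single c 1) := by
        apply Finset.sum_congr rfl
        intro c _
        have hrow : PhiMap rows cond (Pi.single e 1) c = if cond c ∧ e ∈ rows c then 1 else 0 := by
          rw [PhiMap_apply]
          by_cases h : cond c
          · simp [h, Pi.single_apply]
          · simp [h]
        rw [hrow]
        by_cases h1 : cond c <;> by_cases h2 : e ∈ rows c <;> simp [hg, h1, h2]
      rw [hcg]
      exact h0
    have hsum := hobstr g hmask hedge
    rw [dual_expand]
    have hct : (∑ c, t c * φ (Pi.single c 1)) = ∑ c, g c := by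
      apply Finset.sum_congr rfl
      intro c _
      by_cases h : cond c <;> simp [hg, ht_def, h]
    rw [hct]
    exact hsum
  obtain ⟨f, hf⟩ := ht
  refine ⟨f, fun c hc => ?_⟩
  have := congr_fun hf c
  rw [PhiMap_apply] at this
  simpa [ht_def, hc] using this

lemma mem_blowup' {W : Type*} [Fintype W] [DecidableEq W] (A : Finset (W × W)) (s : W → ℕ)
    (e : (Σ w, Fin (s w)) × (Σ w, Fin (s w))) :
    e ∈ blowup A s ↔ (e.1.1, e.2.1) ∈ A := by simp [blowup]

lemma even_cast_zmod2'' {n : ℕ} (h : Even n) : (n : ZMod 2) = 0 := by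
  obtain ⟨k, rfl⟩ := h
  push_cast
  rw [← two_mul]
  have h2 : (2 : ZMod 2) = 0 := by decide
  rw [h2, zero_mul]

lemma comb_lemma {W : Type*} [Fintype W] [DecidableEq W] (A : Finset (W × W))
    (hT : IsTournament A) (s : W → ℕ) (hs : ∀ w, 1 ≤ s w) (x : Σ w, Fin (s w))
    (a b : (Σ w, Fin (s w)) → ZMod 2)
    (ha : ∀ v, a v ≠ 0 →
      v ≠ x ∧ (outCut (blowup A s) v).Nonempty ∧ Even (outCut (blowup A s) v).card)
    (hb : ∀ v, b v ≠ 0 →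
      v ≠ x ∧ (inCut (blowup A s) v).Nonempty ∧ Even (inCut (blowup A s) v).card)
    (hedge : ∀ e ∈ blowup A s, a e.1 + b e.2 = 0) :
    (∑ v, a v) + (∑ v, b v) = 0 := by
  have h01 : ∀ z : ZMod 2, z ≠ 0 → z = 1 := by decide
  have hadd1 : ∀ z w : ZMod 2, z + w = 0 → z = 1 → w = 1 := by decide
  have hadd2 : ∀ z w : ZMod 2, z + w = 0 → w = 1 → z = 1 := by decide
  by_cases hA : ∀ v, a v = 0
  · have hB : ∀ v, b v = 0 := by
      intro v
      by_contra hv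
      obtain ⟨-, ⟨e, he⟩, -⟩ := hb v hv
      rw [inCut, Finset.mem_filter] at he
      have h0 := hedge e he.1
      rw [hA e.1, he.2, zero_add] at h0
      exact hv h0
    rw [Finset.sum_eq_zero (fun v _ => hA v), Finset.sum_eq_zero (fun v _ => hB v), add_zero]
  · push_neg at hA
    obtain ⟨u0, hu0⟩ := hA
    have hau0 : a u0 = 1 := h01 _ hu0
    -- basic propagation lemmas
    have key1 : ∀ (p q : W) (i : Fin (s p)) (j : Fin (s q)),
        (p, q) ∈ A → a ⟨p, i⟩ = 1 → b ⟨q, j⟩ = 1 := by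
      intro p q i j hpq hai
      have hm : ((⟨p, i⟩ : Σ w, Fin (s w)), (⟨q, j⟩ : Σ w, Fin (s w))) ∈ blowup A s :=
        (mem_blowup' A s _).mpr hpq
      exact hadd1 _ _ (hedge _ hm) hai
    have key2 : ∀ (p q : W) (i : Fin (s p)) (j : Fin (s q)),
        (p, q) ∈ A → b ⟨q, j⟩ = 1 → a ⟨p, i⟩ = 1 := by
      intro p q i j hpq hbj
      have hm : ((⟨p, i⟩ : Σ w, Fin (s w)), (⟨q, j⟩ : Σ w, Fin (s w))) ∈ blowup A s :=
        (mem_blowup' A s _).mpr hpq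
      exact hadd2 _ _ (hedge _ hm) hbj
    have aout : ∀ v : Σ w, Fin (s w), a v = 1 → ∃ q, (v.1, q) ∈ A := by
      intro v hv
      obtain ⟨-, ⟨e, he⟩, -⟩ := ha v (by rw [hv]; exact one_ne_zero)
      rw [outCut, Finset.mem_filter] at he
      refine ⟨e.2.1, ?_⟩
      have := (mem_blowup' A s e).mp he.1
      rwa [he.2] at this
    have bin : ∀ v : Σ w, Fin (s w), b v = 1 → ∃ p, (p, v.1) ∈ A := by
      intro v hv
      obtain ⟨-, ⟨e, he⟩, -⟩ := hb v (by rw [hv]; exact one_ne_zero)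
      rw [inCut, Finset.mem_filter] at he
      refine ⟨e.1.1, ?_⟩
      have := (mem_blowup' A s e).mp he.1
      rwa [he.2] at this
    have asat : ∀ (p : W) (i i' : Fin (s p)), a ⟨p, i⟩ = 1 → a ⟨p, i'⟩ = 1 := by
      intro p i i' h
      obtain ⟨q, hq⟩ := aout ⟨p, i⟩ h
      exact key2 p q i' ⟨0, hs q⟩ hq (key1 p q i ⟨0, hs q⟩ hq h)
    have bsat : ∀ (q : W) (j j' : Fin (s q)), b ⟨q, j⟩ = 1 → b ⟨q, j'⟩ = 1 := by
      intro q j j' h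
      obtain ⟨p, hp⟩ := bin ⟨q, j⟩ h
      exact key1 p q ⟨0, hs p⟩ j' hp (key2 p q ⟨0, hs p⟩ j hp h)
    have hx1 : ∀ i : Fin (s x.1), a ⟨x.1, i⟩ = 0 := by
      intro i
      by_contra h
      have hx : a x = 1 := asat x.1 i x.2 (h01 _ h)
      exact (ha x (by rw [hx]; exact one_ne_zero)).1 rfl
    have hx2 : ∀ j : Fin (s x.1), b ⟨x.1, j⟩ = 0 := by
      intro j
      by_contra h
      have hx : b x = 1 := bsat x.1 j x.2 (h01 _ h)
      exact (hb x (by rw [hx]; exact one_ne_zero)).1 rfl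
    have htot : ∀ p q : W, p ≠ q → (p, q) ∈ A ∨ (q, p) ∈ A := by
      intro p q h
      by_cases hpq : (p, q) ∈ A
      · exact Or.inl hpq
      · exact Or.inr (not_not.mp (fun hqp => hpq ((hT.2 p q h).mpr hqp)))
    have hPOx : ∀ (p : W) (i : Fin (s p)), a ⟨p, i⟩ = 1 → (x.1, p) ∈ A := by
      intro p i h
      have hpx : p ≠ x.1 := by
        rintro rfl
        rw [hx1 i] at h
        exact zero_ne_one h
      rcases htot p x.1 hpx with hc | hc
      · exfalso
        have hbx : b ⟨x.1, x.2⟩ = 1 := key1 p x.1 i x.2 hc h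
        rw [hx2 x.2] at hbx
        exact zero_ne_one hbx
      · exact hc
    have hPIx : ∀ (q : W) (j : Fin (s q)), b ⟨q, j⟩ = 1 → (q, x.1) ∈ A := by
      intro q j h
      have hqx : q ≠ x.1 := by
        rintro rfl
        rw [hx2 j] at h
        exact zero_ne_one h
      rcases htot q x.1 hqx with hc | hc
      · exact hc
      · exfalso
        have hax : a ⟨x.1, x.2⟩ = 1 := key2 x.1 q x.2 j hc h
        rw [hx1 x.2] at hax
        exact zero_ne_one hax
    have hdisj : ∀ (p : W) (i j : Fin (s p)), a ⟨p, i⟩ = 1 → b ⟨p, j⟩ = 1 → False := by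
      intro p i j hai hbj
      have h1 : (x.1, p) ∈ A := hPOx p i hai
      have hax : a ⟨x.1, x.2⟩ = 1 := key2 x.1 p x.2 j h1 hbj
      rw [hx1 x.2] at hax
      exact zero_ne_one hax
    have hauniq : ∀ (p p' : W) (i : Fin (s p)) (i' : Fin (s p')),
        a ⟨p, i⟩ = 1 → a ⟨p', i'⟩ = 1 → p = p' := by
      intro p p' i i' h h'
      by_contra hne
      rcases htot p p' hne with hc | hc
      · exact hdisj p' i' i' h' (key1 p p' i i' hc h)
      · exact hdisj p i i h (key1 p' p i' i hc h')
    have hbuniq : ∀ (q q' : W) (j : Fin (s q)) (j' : Fin (s q')),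
        b ⟨q, j⟩ = 1 → b ⟨q', j'⟩ = 1 → q = q' := by
      intro q q' j j' h h'
      by_contra hne
      rcases htot q q' hne with hc | hc
      · exact hdisj q j j (key2 q q' j j' hc h') h
      · exact hdisj q' j' j' (key2 q' q j' j hc h) h'
    -- the two special parts
    obtain ⟨q0, hq0⟩ := aout u0 hau0
    have hap0 : a ⟨u0.1, u0.2⟩ = 1 := hau0
    have hbq0 : ∀ j : Fin (s q0), b ⟨q0, j⟩ = 1 := fun j => key1 u0.1 q0 u0.2 j hq0 hap0
    have hap0all : ∀ i : Fin (s u0.1), a ⟨u0.1, i⟩ = 1 :=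
      fun i => key2 u0.1 q0 i ⟨0, hs q0⟩ hq0 (hbq0 _)
    have haval : ∀ v : Σ w, Fin (s w), v.1 ≠ u0.1 → a v = 0 := by
      intro v h
      by_contra hv
      exact h (hauniq v.1 u0.1 v.2 u0.2 (h01 _ hv) hap0)
    have hbval : ∀ v : Σ w, Fin (s w), v.1 ≠ q0 → b v = 0 := by
      intro v h
      by_contra hv
      exact h (hbuniq v.1 q0 v.2 ⟨0, hs q0⟩ (h01 _ hv) (hbq0 _))
    -- sums
    have hsa : (∑ v : Σ w, Fin (s w), a v) = (s u0.1 : ZMod 2) := by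
      rw [← Finset.univ_sigma_univ, Finset.sum_sigma]
      rw [Finset.sum_eq_single u0.1]
      · rw [Finset.sum_congr rfl (fun i _ => hap0all i)]
        simp [Finset.card_univ]
      · intro p _ hp
        exact Finset.sum_eq_zero fun i _ => haval ⟨p, i⟩ hp
      · intro h
        exact absurd (Finset.mem_univ _) h
    have hsb : (∑ v : Σ w, Fin (s w), b v) = (s q0 : ZMod 2) := by
      rw [← Finset.univ_sigma_univ, Finset.sum_sigma]
      rw [Finset.sum_eq_single q0]
      · rw [Finset.sum_congr rfl (fun j _ => hbq0 j)]
        simp [Finset.card_univ]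
      · intro q _ hq
        exact Finset.sum_eq_zero fun j _ => hbval ⟨q, j⟩ hq
      · intro h
        exact absurd (Finset.mem_univ _) h
    -- cardinalities of the two semi-cuts
    have houtcut : outCut (blowup A s) u0 =
        Finset.univ.image (fun j : Fin (s q0) =>
          ((u0 : Σ w, Fin (s w)), (⟨q0, j⟩ : Σ w, Fin (s w)))) := by
      ext e
      simp only [outCut, Finset.mem_filter, Finset.mem_image, Finset.mem_univ, true_and]
      constructor
      · rintro ⟨hmem, h1⟩
        have harc := (mem_blowup' A s e).mp hmem
        rw [h1] at harc
        have hb2 : b ⟨e.2.1, e.2.2⟩ = 1 := key1 u0.1 e.2.1 u0.2 e.2.2 harc hap0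
        have h2 : e.2.1 = q0 := hbuniq e.2.1 q0 e.2.2 ⟨0, hs q0⟩ hb2 (hbq0 _)
        obtain ⟨e1, e2⟩ := e
        obtain ⟨w2, j2⟩ := e2
        dsimp at h1 h2
        subst h1
        subst h2
        exact ⟨j2, rfl⟩
      · rintro ⟨j, rfl⟩
        exact ⟨(mem_blowup' A s _).mpr hq0, rfl⟩
    have hout_inj : Function.Injective (fun j : Fin (s q0) =>
        ((u0 : Σ w, Fin (s w)), (⟨q0, j⟩ : Σ w, Fin (s w)))) := by
      intro j j' h
      have h2 := congrArg Prod.snd h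
      simpa using h2
    have houtcard : (outCut (blowup A s) u0).card = s q0 := by
      rw [houtcut, Finset.card_image_of_injective _ hout_inj, Finset.card_univ,
        Fintype.card_fin]
    have hincut : inCut (blowup A s) ⟨q0, ⟨0, hs q0⟩⟩ =
        Finset.univ.image (fun i : Fin (s u0.1) =>
          ((⟨u0.1, i⟩ : Σ w, Fin (s w)), (⟨q0, ⟨0, hs q0⟩⟩ : Σ w, Fin (s w)))) := by
      ext e
      simp only [inCut, Finset.mem_filter, Finset.mem_image, Finset.mem_univ, true_and]
      constructor
      · rintro ⟨hmem, h2⟩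
        have harc := (mem_blowup' A s e).mp hmem
        rw [h2] at harc
        have ha1 : a ⟨e.1.1, e.1.2⟩ = 1 := key2 e.1.1 q0 e.1.2 ⟨0, hs q0⟩ harc (hbq0 _)
        have h1 : e.1.1 = u0.1 := hauniq e.1.1 u0.1 e.1.2 u0.2 ha1 hap0
        obtain ⟨e1, e2⟩ := e
        obtain ⟨w1, i1⟩ := e1
        dsimp at h1 h2
        subst h1
        subst h2
        exact ⟨i1, rfl⟩
      · rintro ⟨i, rfl⟩
        exact ⟨(mem_blowup' A s _).mpr hq0, rfl⟩
    have hin_inj : Function.Injective (fun i : Fin (s u0.1) =>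
        ((⟨u0.1, i⟩ : Σ w, Fin (s w)), (⟨q0, ⟨0, hs q0⟩⟩ : Σ w, Fin (s w)))) := by
      intro i i' h
      have h1 := congrArg Prod.fst h
      simpa using h1
    have hincard : (inCut (blowup A s) ⟨q0, ⟨0, hs q0⟩⟩).card = s u0.1 := by
      rw [hincut, Finset.card_image_of_injective _ hin_inj, Finset.card_univ,
        Fintype.card_fin]
    have hevq : Even (s q0) := by
      have := (ha u0 hu0).2.2
      rwa [houtcard] at this
    have hevp : Even (s u0.1) := by
      have := (hb ⟨q0, ⟨0, hs q0⟩⟩ (by rw [hbq0]; exact one_ne_zero)).2.2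
      rwa [hincard] at this
    rw [hsa, hsb, even_cast_zmod2'' hevp, even_cast_zmod2'' hevq, add_zero]

lemma even_cast_zmod2' {n : ℕ} (h : Even n) : (n : ZMod 2) = 0 := by
  obtain ⟨k, rfl⟩ := h
  push_cast
  rw [← two_mul]
  have h2 : (2 : ZMod 2) = 0 := by decide
  rw [h2, zero_mul]

lemma cut_odd {E : Type*} [DecidableEq E] (S : Finset E) (f : E → ZMod 2) (hS : S.Nonempty)
    (h : Even S.card → ∑ e ∈ S, f e = 1) :
    ∃ i, Odd ((S.filter fun e => (f e).val = i)).card := by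
  have hneg : ∀ z : ZMod 2, (¬ z.val = 0) ↔ z.val = 1 := by decide
  have hsplit := Finset.card_filter_add_card_filter_not
    (s := S) (p := fun e => (f e).val = 0)
  have hfilter1 : (S.filter fun e => ¬ (f e).val = 0) = S.filter fun e => (f e).val = 1 := by
    apply Finset.filter_congr
    intro e _
    exact hneg (f e)
  rw [hfilter1] at hsplit
  rcases Nat.even_or_odd S.card with hev | hodd
  · refine ⟨1, ?_⟩
    have hsum := h hev
    have hrepr : ∀ z : ZMod 2, z = if z.val = 1 then 1 else 0 := by decide
    have hs2 : ∑ e ∈ S, f e = ((S.filter fun e => (f e).val = 1).card : ZMod 2) := by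
      rw [Finset.sum_congr rfl (fun e _ => hrepr (f e))]
      rw [Finset.sum_boole]
    rw [hs2] at hsum
    rcases Nat.even_or_odd (S.filter fun e => (f e).val = 1).card with he | ho
    · rw [even_cast_zmod2' he] at hsum
      exact absurd hsum (by decide)
    · exact ho
  · rcases Nat.even_or_odd ((S.filter fun e => (f e).val = 0)).card with h0e | h0o
    · refine ⟨1, ?_⟩
      rw [Nat.odd_iff] at hodd ⊢
      rw [Nat.even_iff] at h0e
      omega
    · exact ⟨0, h0o⟩

/-- If an extended tournament has weak-odd chromatic index 3, then for any prescribed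
vertex there is a 2-arc-coloring satisfying the weak-odd condition at every other
vertex. -/
theorem extended_tournament_prescribed {W : Type*} [Fintype W] [DecidableEq W]
    (A : Finset (W × W)) (hT : IsTournament A)
    (s : W → ℕ) (hs : ∀ w : W, 1 ≤ s w)
    (h3 : woIndex (blowup A s) = 3) (x : Σ w, Fin (s w)) :
    ∃ φ : (Σ w, Fin (s w)) × (Σ w, Fin (s w)) → ℕ,
      (∀ e ∈ blowup A s, φ e < 2) ∧
      ∀ u : Σ w, Fin (s w), u ≠ x → SatAt (blowup A s) φ u := by
  classical
  set rows : ((Σ w, Fin (s w)) ⊕ (Σ w, Fin (s w))) →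
      Finset ((Σ w, Fin (s w)) × (Σ w, Fin (s w))) :=
    Sum.elim (fun v => outCut (blowup A s) v) (fun v => inCut (blowup A s) v) with hrows
  set cond : ((Σ w, Fin (s w)) ⊕ (Σ w, Fin (s w))) → Prop :=
    Sum.elim
      (fun v => v ≠ x ∧ (outCut (blowup A s) v).Nonempty ∧ Even (outCut (blowup A s) v).card)
      (fun v => v ≠ x ∧ (inCut (blowup A s) v).Nonempty ∧ Even (inCut (blowup A s) v).card)
    with hcond
  have hobstr : ∀ g : ((Σ w, Fin (s w)) ⊕ (Σ w, Fin (s w))) → ZMod 2,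
      (∀ c, ¬ cond c → g c = 0) →
      (∀ e : (Σ w, Fin (s w)) × (Σ w, Fin (s w)),
        ∑ c, (if e ∈ rows c then g c else 0) = 0) → ∑ c, g c = 0 := ?hobstr
  obtain ⟨f, hf⟩ := exists_solution rows cond hobstr
  refine ⟨fun e => (f e).val, fun e _ => ZMod.val_lt _, ?_⟩
  intro u hu
  constructor
  · intro hne
    exact cut_odd _ f hne (fun hev => by
      have := hf (Sum.inl u) (by simp only [hcond, Sum.elim_inl]; exact ⟨hu, hne, hev⟩)
      simpa [hrows] using this)
  · intro hne
    exact cut_odd _ f hne (fun hev => by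
      have := hf (Sum.inr u) (by simp only [hcond, Sum.elim_inr]; exact ⟨hu, hne, hev⟩)
      simpa [hrows] using this)
  case hobstr =>
    intro g hmask hedge
    rw [Fintype.sum_sum_type]
    refine comb_lemma A hT s hs x (fun v => g (Sum.inl v)) (fun v => g (Sum.inr v)) ?_ ?_ ?_
    · intro v hv
      by_contra hc
      exact hv (hmask (Sum.inl v) (by simpa [hcond] using hc))
    · intro v hv
      by_contra hc
      exact hv (hmask (Sum.inr v) (by simpa [hcond] using hc))
    · intro e he
      have h0 := hedge e
      rw [Fintype.sum_sum_type] at h0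
      have h1 : (∑ v : Σ w, Fin (s w),
          if e ∈ rows (Sum.inl v) then g (Sum.inl v) else 0) = g (Sum.inl e.1) := by
        rw [Finset.sum_eq_single e.1]
        · rw [if_pos]
          simp only [hrows, Sum.elim_inl]
          exact Finset.mem_filter.mpr ⟨he, rfl⟩
        · intro v _ hv
          rw [if_neg]
          intro hmem
          simp only [hrows, Sum.elim_inl, outCut, Finset.mem_filter] at hmem
          exact hv hmem.2.symm
        · intro h
          exact absurd (Finset.mem_univ _) h
      have h2 : (∑ v : Σ w, Fin (s w),
          if e ∈ rows (Sum.inr v) then g (Sum.inr v) else 0) = g (Sum.inr e.2) := by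
        rw [Finset.sum_eq_single e.2]
        · rw [if_pos]
          simp only [hrows, Sum.elim_inr]
          exact Finset.mem_filter.mpr ⟨he, rfl⟩
        · intro v _ hv
          rw [if_neg]
          intro hmem
          simp only [hrows, Sum.elim_inr, inCut, Finset.mem_filter] at hmem
          exact hv hmem.2.symm
        · intro h
          exact absurd (Finset.mem_univ _) h
      rw [h1, h2] at h0
      exact h0
end

section
/- Every tournament T admits a 2-arc-coloring such that the weak-odd condition is satisfied at every vertex except possibly one prescribed vertex v ∈ V(T). -/
open Finset
open scoped Classical

open WeakOdd

namespace WOTour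

open WeakOdd

variable {V : Type*} [Fintype V] [DecidableEq V]

/-- A semi-cut indexed by a vertex and a side. -/
def scut (A : Finset (V × V)) (p : V × Bool) : Finset (V × V) :=
  if p.2 then outCut A p.1 else inCut A p.1

/-- A port is critical if it needs a parity constraint. -/
def Cr (A : Finset (V × V)) (v : V) (p : V × Bool) : Prop :=
  p.1 ≠ v ∧ (scut A p).Nonempty ∧ Even (scut A p).card

/-- The constraint matrix. -/
noncomputable def Mx (A : Finset (V × V)) (v : V) :
    Matrix {p : V × Bool // Cr A v p} (V × V) (ZMod 2) :=
  fun k e => if e ∈ scut A k.1 then 1 else 0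

lemma zmod2_ne_one {a : ZMod 2} (h : a ≠ 1) : a = 0 := by revert h; revert a; decide

lemma odd_of_natCast (n : ℕ) (h : (n : ZMod 2) = 1) : Odd n := by
  rw [← ZMod.natCast_mod n 2] at h
  have h2 : n % 2 = 0 ∨ n % 2 = 1 := by omega
  rcases h2 with h2 | h2
  · rw [h2] at h; exact absurd h (by decide)
  · exact Nat.odd_iff.mpr h2

lemma sum_eq_card (s : Finset (V × V)) (x : V × V → ZMod 2) :
    ∑ e ∈ s, x e = ((s.filter fun e => x e = 1).card : ZMod 2) := by
  rw [← Finset.sum_filter_add_sum_filter_not s (fun e => x e = 1)]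
  rw [Finset.sum_eq_zero (fun e he => zmod2_ne_one (Finset.mem_filter.mp he).2), add_zero]
  rw [Finset.sum_congr rfl (fun e he => (Finset.mem_filter.mp he).2)]
  simp

lemma exists_odd_class (s : Finset (V × V)) (x : V × V → ZMod 2)
    (h : Odd s.card ∨ Odd (s.filter fun e => x e = 1).card) :
    ∃ i, Odd ((s.filter fun e => (x e).val = i).card) := by
  have hval1 : ∀ a : ZMod 2, a.val = 1 ↔ a = 1 := by decide
  have hval0 : ∀ a : ZMod 2, a.val = 0 ↔ a = 0 := by decide
  have h1 : (s.filter fun e => (x e).val = 1) = s.filter fun e => x e = 1 :=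
    Finset.filter_congr fun e _ => hval1 (x e)
  have h0 : (s.filter fun e => (x e).val = 0) = s.filter fun e => x e = 0 :=
    Finset.filter_congr fun e _ => hval0 (x e)
  have hnot : (s.filter fun e => ¬ x e = 1) = s.filter fun e => x e = 0 :=
    Finset.filter_congr fun e _ => by
      constructor
      · exact fun hh => zmod2_ne_one hh
      · intro h0' h1'; rw [h0'] at h1'; exact absurd h1' (by decide)
  have hsplit := Finset.card_filter_add_card_filter_not (s := s)
    (p := fun e => x e = 1)
  rw [hnot] at hsplit
  rcases h with h | h
  · rcases Nat.even_or_odd (s.filter fun e => x e = 1).card with he | ho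
    · refine ⟨0, ?_⟩
      rw [h0]
      rw [Nat.odd_iff] at h ⊢
      rw [Nat.even_iff] at he
      omega
    · exact ⟨1, by rw [h1]; exact ho⟩
  · exact ⟨1, by rw [h1]; exact h⟩

lemma mulVec_eq (A : Finset (V × V)) (v : V) (x : V × V → ZMod 2)
    (k : {p : V × Bool // Cr A v p}) :
    (Mx A v).mulVec x k = (((scut A k.1).filter fun e => x e = 1).card : ZMod 2) := by
  have h : (Mx A v).mulVec x k = ∑ e ∈ scut A k.1, x e := by
    simp only [Matrix.mulVec, dotProduct, Mx, ite_mul, one_mul, zero_mul]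
    rw [Finset.sum_ite_mem, Finset.univ_inter]
  rw [h, sum_eq_card]

lemma rows_indep (A : Finset (V × V)) (hT : IsTournament A) (v : V) :
    LinearIndependent (ZMod 2) (fun k : {p : V × Bool // Cr A v p} => Mx A v k) := by
  rw [Fintype.linearIndependent_iff]
  intro g hg k0
  by_contra hk0
  set inP : V → Prop := fun u => ∃ h : Cr A v (u, true), g ⟨(u, true), h⟩ ≠ 0 with hinP
  set inQ : V → Prop := fun u => ∃ h : Cr A v (u, false), g ⟨(u, false), h⟩ ≠ 0 with hinQ
  have key : ∀ a b : V, (a, b) ∈ A → (inP a ↔ inQ b) := by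
    intro a b hab
    have h1 : ∑ k : {p : V × Bool // Cr A v p}, g k * Mx A v k (a, b) = 0 := by
      have h0 := congrFun hg (a, b)
      simpa [Finset.sum_apply, Pi.smul_apply, smul_eq_mul] using h0
    have h2 : ∀ k : {p : V × Bool // Cr A v p},
        g k * Mx A v k (a, b) = if k.1 = (a, true) ∨ k.1 = (b, false) then g k else 0 := by
      intro k
      have hmem : (a, b) ∈ scut A k.1 ↔ (k.1 = (a, true) ∨ k.1 = (b, false)) := by
        obtain ⟨⟨u, bb⟩, hk⟩ := k
        cases bb
        · simp [scut, inCut, Finset.mem_filter, hab, Prod.ext_iff, eq_comm]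
        · simp [scut, outCut, Finset.mem_filter, hab, Prod.ext_iff, eq_comm]
      by_cases hc : k.1 = (a, true) ∨ k.1 = (b, false)
      · have hmm : (a, b) ∈ scut A k.1 := hmem.mpr hc
        simp [Mx, hmm, hc]
      · have hmm : (a, b) ∉ scut A k.1 := fun h => hc (hmem.mp h)
        simp [Mx, hmm, hc]
    rw [Finset.sum_congr rfl (fun k _ => h2 k), ← Finset.sum_filter] at h1
    by_cases hCa : Cr A v (a, true) <;> by_cases hCb : Cr A v (b, false)
    · have hset : (Finset.univ.filter
          fun k : {p : V × Bool // Cr A v p} => k.1 = (a, true) ∨ k.1 = (b, false))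
          = {⟨(a, true), hCa⟩, ⟨(b, false), hCb⟩} := by
        ext k
        simp [Finset.mem_filter, Subtype.ext_iff]
      rw [hset, Finset.sum_pair (by simp)] at h1
      have hz : ∀ u w : ZMod 2, u + w = 0 → ((u ≠ 0) ↔ (w ≠ 0)) := by decide
      have hiff := hz _ _ h1
      constructor
      · rintro ⟨h', hg'⟩; exact ⟨hCb, hiff.mp hg'⟩
      · rintro ⟨h', hg'⟩; exact ⟨hCa, hiff.mpr hg'⟩
    · have hset : (Finset.univ.filter
          fun k : {p : V × Bool // Cr A v p} => k.1 = (a, true) ∨ k.1 = (b, false))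
          = {⟨(a, true), hCa⟩} := by
        ext k
        simp only [Finset.mem_filter, Finset.mem_univ, true_and, Finset.mem_singleton,
          Subtype.ext_iff]
        constructor
        · rintro (h | h)
          · exact h
          · exact absurd (h ▸ k.2) hCb
        · exact fun h => Or.inl h
      rw [hset, Finset.sum_singleton] at h1
      constructor
      · rintro ⟨h', hg'⟩; exact absurd h1 hg'
      · rintro ⟨h', hg'⟩; exact absurd h' hCb
    · have hset : (Finset.univ.filter
          fun k : {p : V × Bool // Cr A v p} => k.1 = (a, true) ∨ k.1 = (b, false))
          = {⟨(b, false), hCb⟩} := by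
        ext k
        simp only [Finset.mem_filter, Finset.mem_univ, true_and, Finset.mem_singleton,
          Subtype.ext_iff]
        constructor
        · rintro (h | h)
          · exact absurd (h ▸ k.2) hCa
          · exact h
        · exact fun h => Or.inr h
      rw [hset, Finset.sum_singleton] at h1
      constructor
      · rintro ⟨h', hg'⟩; exact absurd h' hCa
      · rintro ⟨h', hg'⟩; exact absurd h1 hg'
    · constructor
      · rintro ⟨h', hg'⟩; exact absurd h' hCa
      · rintro ⟨h', hg'⟩; exact absurd h' hCb
  have htot : ∀ x y : V, x ≠ y → (x, y) ∈ A ∨ (y, x) ∈ A := by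
    intro x y hxy
    by_cases h : (x, y) ∈ A
    · exact Or.inl h
    · exact Or.inr ((hT.2 y x hxy.symm).mpr h)
  have hPne : ∀ u, inP u → u ≠ v := fun u hu => hu.choose.1
  have hQne : ∀ u, inQ u → u ≠ v := fun u hu => hu.choose.1
  have hdisj : ∀ u, inP u → inQ u → False := by
    intro u hP hQ
    have huv : u ≠ v := hPne u hP
    rcases htot u v huv with h | h
    · exact hQne v ((key u v h).mp hP) rfl
    · exact hPne v ((key v u h).mpr hQ) rfl
  have htwo : ∀ (s : Finset (V × V)), s.Nonempty → Even s.card →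
      ∃ e₁ ∈ s, ∃ e₂ ∈ s, e₁ ≠ e₂ := by
    intro s hne heven
    have hpos := Finset.card_pos.mpr hne
    have : 1 < s.card := by rcases heven with ⟨m, hm⟩; omega
    exact Finset.one_lt_card.mp this
  have hPfalse : ∀ u, inP u → False := by
    intro u hP
    obtain ⟨hne, hnonempty, heven⟩ := hP.choose
    obtain ⟨e₁, he₁, e₂, he₂, hne12⟩ := htwo _ hnonempty heven
    have hs : scut A (u, true) = outCut A u := by simp [scut]
    rw [hs] at he₁ he₂
    obtain ⟨he₁A, he₁1⟩ := Finset.mem_filter.mp he₁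
    obtain ⟨he₂A, he₂1⟩ := Finset.mem_filter.mp he₂
    have hy12 : e₁.2 ≠ e₂.2 := by
      intro h
      exact hne12 (Prod.ext (he₁1.trans he₂1.symm) h)
    have harc₁ : (u, e₁.2) ∈ A := by rwa [← he₁1, Prod.mk.eta]
    have harc₂ : (u, e₂.2) ∈ A := by rwa [← he₂1, Prod.mk.eta]
    have hQ₁ : inQ e₁.2 := (key u e₁.2 harc₁).mp hP
    have hQ₂ : inQ e₂.2 := (key u e₂.2 harc₂).mp hP
    rcases htot e₁.2 e₂.2 hy12 with h | h
    · exact hdisj e₁.2 ((key e₁.2 e₂.2 h).mpr hQ₂) hQ₁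
    · exact hdisj e₂.2 ((key e₂.2 e₁.2 h).mpr hQ₁) hQ₂
  have hQfalse : ∀ u, inQ u → False := by
    intro u hQ
    obtain ⟨hne, hnonempty, heven⟩ := hQ.choose
    obtain ⟨e₁, he₁, e₂, he₂, hne12⟩ := htwo _ hnonempty heven
    have hs : scut A (u, false) = inCut A u := by simp [scut]
    rw [hs] at he₁ he₂
    obtain ⟨he₁A, he₁1⟩ := Finset.mem_filter.mp he₁
    obtain ⟨he₂A, he₂1⟩ := Finset.mem_filter.mp he₂
    have hy12 : e₁.1 ≠ e₂.1 := by
      intro h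
      exact hne12 (Prod.ext h (he₁1.trans he₂1.symm))
    have harc₁ : (e₁.1, u) ∈ A := by rwa [← he₁1, Prod.mk.eta]
    have harc₂ : (e₂.1, u) ∈ A := by rwa [← he₂1, Prod.mk.eta]
    have hP₁ : inP e₁.1 := (key e₁.1 u harc₁).mpr hQ
    have hP₂ : inP e₂.1 := (key e₂.1 u harc₂).mpr hQ
    rcases htot e₁.1 e₂.1 hy12 with h | h
    · exact hdisj e₂.1 hP₂ ((key e₁.1 e₂.1 h).mp hP₁)
    · exact hdisj e₁.1 hP₁ ((key e₂.1 e₁.1 h).mp hP₂)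
  obtain ⟨⟨u, bb⟩, hcr⟩ := k0
  cases bb
  · exact hQfalse u ⟨hcr, hk0⟩
  · exact hPfalse u ⟨hcr, hk0⟩

lemma exists_sol (A : Finset (V × V)) (hT : IsTournament A) (v : V) :
    ∃ x : V × V → ZMod 2, ∀ k : {p : V × Bool // Cr A v p}, (Mx A v).mulVec x k = 1 := by
  have hL := rows_indep A hT v
  have hinj : Function.Injective (Mx A v).vecMul := Matrix.vecMul_injective_iff.mpr hL
  have hinj' : Function.Injective ((Mx A v).transpose).mulVecLin := by
    intro x y hxy
    apply hinj
    simpa [Matrix.mulVecLin_apply, Matrix.mulVec_transpose] using hxy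
  have hrank : (Mx A v).rank = Fintype.card {p : V × Bool // Cr A v p} := by
    rw [← Matrix.rank_transpose]
    unfold Matrix.rank
    rw [LinearMap.finrank_range_of_inj hinj']
    exact Module.finrank_pi (ZMod 2)
  have htop : LinearMap.range (Mx A v).mulVecLin = ⊤ := by
    apply Submodule.eq_top_of_finrank_eq
    have := (Mx A v).rank
    show Module.finrank (ZMod 2) (LinearMap.range (Mx A v).mulVecLin) = _
    rw [show Module.finrank (ZMod 2) (LinearMap.range (Mx A v).mulVecLin) = (Mx A v).rank from rfl,
      hrank, Module.finrank_pi (ZMod 2)]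
  obtain ⟨x, hx⟩ := LinearMap.range_eq_top.mp htop (fun _ => 1)
  refine ⟨x, fun k => ?_⟩
  have : (Mx A v).mulVecLin x k = 1 := by rw [hx]
  rwa [Matrix.mulVecLin_apply] at this

end WOTour


/-- Every tournament admits a 2-arc-coloring satisfying the weak-odd condition at
every vertex except possibly one prescribed vertex. -/
theorem tournament_prescribed {V : Type*} [Fintype V] [DecidableEq V]
    (A : Finset (V × V)) (hT : IsTournament A) (v : V) :
    ∃ φ : V × V → ℕ, (∀ e ∈ A, φ e < 2) ∧ ∀ u : V, u ≠ v → SatAt A φ u := by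
  classical
  obtain ⟨x, hx⟩ := WOTour.exists_sol A hT v
  refine ⟨fun e => (x e).val, fun e _ => ZMod.val_lt (x e), fun u hu => ?_⟩
  constructor
  · intro hne
    apply WOTour.exists_odd_class
    rcases Nat.even_or_odd (outCut A u).card with he | ho
    · right
      have hk : WOTour.Cr A v (u, true) :=
        ⟨hu, by simpa [WOTour.scut] using hne, by simpa [WOTour.scut] using he⟩
      have h1 := hx ⟨(u, true), hk⟩
      rw [WOTour.mulVec_eq] at h1
      apply WOTour.odd_of_natCast
      simpa [WOTour.scut] using h1
    · exact Or.inl ho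
  · intro hne
    apply WOTour.exists_odd_class
    rcases Nat.even_or_odd (inCut A u).card with he | ho
    · right
      have hk : WOTour.Cr A v (u, false) :=
        ⟨hu, by simpa [WOTour.scut] using hne, by simpa [WOTour.scut] using he⟩
      have h1 := hx ⟨(u, false), hk⟩
      rw [WOTour.mulVec_eq] at h1
      apply WOTour.odd_of_natCast
      simpa [WOTour.scut] using h1
    · exact Or.inl ho
end

section
/- Let T be a tournament with χ'_wo(T) = 3. Then T admits a weak-odd 2-edge covering φ assigning to each arc a nonempty subset of {1,2}, such that at every vertex each nonempty semi-cut contains a color with an odd number of occurrences (counting multiplicity over arcs whose label set contains that color), and moreover at most one arc receives both colors. -/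
open Finset
open scoped Classical

open WeakOdd

section Aux

open Finset WeakOdd
open scoped symmDiff

variable {V : Type*} [Fintype V] [DecidableEq V]

/-- The semicut at a split node: `(v, false)` is the out-semicut, `(v, true)` the in-semicut. -/
def cutN (A : Finset (V × V)) (x : V × Bool) : Finset (V × V) :=
  if x.2 = true then inCut A x.1 else outCut A x.1

lemma cutN_false (A : Finset (V × V)) (v : V) : cutN A (v, false) = outCut A v := by
  simp [cutN]

lemma cutN_true (A : Finset (V × V)) (v : V) : cutN A (v, true) = inCut A v := by
  simp [cutN]

lemma cutN_subset (A : Finset (V × V)) (x : V × Bool) : cutN A x ⊆ A := by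
  unfold cutN outCut inCut
  split <;> exact Finset.filter_subset _ _

lemma mem_cutN {A : Finset (V × V)} {e : V × V} (he : e ∈ A) (x : V × Bool) :
    e ∈ cutN A x ↔ x = (e.1, false) ∨ x = (e.2, true) := by
  obtain ⟨v, b⟩ := x
  cases b <;>
    simp [cutN, outCut, inCut, he, Prod.ext_iff, eq_comm] <;> tauto

/-- number of `F`-arcs in the semicut of `x`. -/
noncomputable def degp (A F : Finset (V × V)) (x : V × Bool) : ℕ :=
  ((cutN A x).filter (· ∈ F)).card

lemma degp_add (A F : Finset (V × V)) (x : V × Bool) :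
    degp A F x + ((cutN A x).filter (· ∉ F)).card = (cutN A x).card :=
  Finset.card_filter_add_card_filter_not _

/-- `x` is a bad node for `F`: nonempty even semicut with even `F`-part. -/
def BadN (A F : Finset (V × V)) (x : V × Bool) : Prop :=
  (cutN A x).Nonempty ∧ Even (cutN A x).card ∧ Even (degp A F x)

noncomputable def ZB (A F : Finset (V × V)) : Finset (V × Bool) :=
  Finset.univ.filter (fun x => BadN A F x)

lemma odd_card_symmDiff (s t : Finset (V × V)) :
    Odd (s ∆ t).card ↔ ¬ (Odd s.card ↔ Odd t.card) := by
  have h1 : (s \ t).card + (s ∩ t).card = s.card := Finset.card_sdiff_add_card_inter s t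
  have h2 : (t \ s).card + (t ∩ s).card = t.card := Finset.card_sdiff_add_card_inter t s
  have h3 : (s ∆ t).card = (s \ t).card + (t \ s).card := by
    rw [symmDiff_def, Finset.sup_eq_union]
    exact Finset.card_union_of_disjoint disjoint_sdiff_sdiff
  have h4 : (s ∩ t).card = (t ∩ s).card := by rw [Finset.inter_comm]
  rw [Nat.odd_iff, Nat.odd_iff, Nat.odd_iff]
  omega

lemma filter_symmDiff (C F G : Finset (V × V)) :
    C.filter (· ∈ F ∆ G) = (C.filter (· ∈ F)) ∆ (C.filter (· ∈ G)) := by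
  ext a
  simp only [Finset.mem_filter, Finset.mem_symmDiff]
  tauto

lemma odd_degp_symmDiff (A F G : Finset (V × V)) (x : V × Bool) :
    Odd (degp A (F ∆ G) x) ↔ ¬ (Odd (degp A F x) ↔ Odd (degp A G x)) := by
  unfold degp
  rw [filter_symmDiff, odd_card_symmDiff]

/-- There is a subset of arcs whose boundary parity is odd exactly at `x` and `y`. -/
def PairFix (A : Finset (V × V)) (x y : V × Bool) : Prop :=
  x ≠ y ∧ ∃ G : Finset (V × V), G ⊆ A ∧ ∀ w, Odd (degp A G w) ↔ (w = x ∨ w = y)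

/-- adjacency of split nodes in the incidence graph. -/
def AdjN (A : Finset (V × V)) (x y : V × Bool) : Prop :=
  ∃ e ∈ A, (x = (e.1, false) ∧ y = (e.2, true)) ∨ (x = (e.2, true) ∧ y = (e.1, false))

lemma AdjN.symm' {A : Finset (V × V)} {x y : V × Bool} (h : AdjN A x y) : AdjN A y x := by
  obtain ⟨e, he, h⟩ := h
  exact ⟨e, he, by tauto⟩

lemma adjN_nonempty {A : Finset (V × V)} {x y : V × Bool} (h : AdjN A x y) :
    (cutN A x).Nonempty := by
  obtain ⟨e, he, h⟩ := h
  refine ⟨e, ?_⟩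
  rw [mem_cutN he]
  tauto

lemma degp_singleton (A : Finset (V × V)) {e : V × V} (he : e ∈ A) (w : V × Bool) :
    Odd (degp A {e} w) ↔ (w = (e.1, false) ∨ w = (e.2, true)) := by
  unfold degp
  have : (cutN A w).filter (· ∈ ({e} : Finset (V × V))) =
      (cutN A w).filter (· = e) := by
    apply Finset.filter_congr; intro a _; simp
  rw [this, Finset.filter_eq']
  split
  · next h => simp [← mem_cutN he, h]
  · next h => simp [← mem_cutN he, h]

lemma adjN_pairFix {A : Finset (V × V)} {x y : V × Bool} (h : AdjN A x y) :
    PairFix A x y := by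
  obtain ⟨e, he, hc⟩ := h
  constructor
  · rcases hc with ⟨hx, hy⟩ | ⟨hx, hy⟩ <;> subst hx <;> subst hy <;> simp [Prod.ext_iff]
  · refine ⟨{e}, by simpa using he, fun w => ?_⟩
    rw [degp_singleton A he w]
    rcases hc with ⟨hx, hy⟩ | ⟨hx, hy⟩ <;> subst hx <;> subst hy <;> tauto

lemma pairFix_symm {A : Finset (V × V)} {x y : V × Bool} (h : PairFix A x y) :
    PairFix A y x := by
  obtain ⟨hne, G, hG, hpar⟩ := h
  exact ⟨hne.symm, G, hG, fun w => by rw [hpar w]; tauto⟩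

lemma pairFix_trans {A : Finset (V × V)} {x y z : V × Bool} (hxz : x ≠ z)
    (h1 : PairFix A x y) (h2 : PairFix A y z) : PairFix A x z := by
  obtain ⟨hxy, G1, hG1, hp1⟩ := h1
  obtain ⟨hyz, G2, hG2, hp2⟩ := h2
  refine ⟨hxz, G1 ∆ G2, ?_, fun w => ?_⟩
  · intro a ha
    rw [Finset.mem_symmDiff] at ha
    rcases ha with ⟨h, _⟩ | ⟨h, _⟩
    · exact hG1 h
    · exact hG2 h
  · rw [odd_degp_symmDiff, hp1 w, hp2 w]
    by_cases hwx : w = x <;> by_cases hwy : w = y <;> by_cases hwz : w = z <;> simp_all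

lemma conn_pairFix {A : Finset (V × V)} {x y : V × Bool}
    (h : Relation.EqvGen (AdjN A) x y) : x = y ∨ PairFix A x y := by
  induction h with
  | rel a b hab => exact Or.inr (adjN_pairFix hab)
  | refl a => exact Or.inl rfl
  | symm a b _ ih =>
    rcases ih with h | h
    · exact Or.inl h.symm
    · exact Or.inr (pairFix_symm h)
  | trans a b c _ _ ih1 ih2 =>
    rcases ih1 with h1 | h1
    · rwa [h1]
    · rcases ih2 with h2 | h2
      · rw [← h2]; exact Or.inr h1
      · by_cases hac : a = c
        · exact Or.inl hac
        · exact Or.inr (pairFix_trans hac h1 h2)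

lemma conn_nonisolated {A : Finset (V × V)} {z x : V × Bool}
    (h : Relation.EqvGen (AdjN A) z x) :
    z = x ∨ ((∃ y, AdjN A z y) ∧ (∃ y, AdjN A x y)) := by
  induction h with
  | rel a b hab => exact Or.inr ⟨⟨b, hab⟩, ⟨a, hab.symm'⟩⟩
  | refl a => exact Or.inl rfl
  | symm a b _ ih =>
    rcases ih with h | ⟨h1, h2⟩
    · exact Or.inl h.symm
    · exact Or.inr ⟨h2, h1⟩
  | trans a b c _ _ ih1 ih2 =>
    rcases ih1 with h1 | ⟨h1, h1'⟩
    · rwa [h1]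
    · rcases ih2 with h2 | ⟨h2, h2'⟩
      · rw [← h2]; exact Or.inr ⟨h1, h1'⟩
      · exact Or.inr ⟨h1, h2'⟩

lemma tournament_total {A : Finset (V × V)} (hT : IsTournament A) {u v : V}
    (h : u ≠ v) : (u, v) ∈ A ∨ (v, u) ∈ A := by
  by_cases hu : (u, v) ∈ A
  · exact Or.inl hu
  · right
    by_contra hv
    exact hu ((hT.2 u v h).mpr hv)

end Aux
open scoped symmDiff

/-- A tournament with weak-odd chromatic index 3 admits a weak-odd 2-edge covering
in which at most one arc receives both colors. -/
theorem tournament_covering_singleton {V : Type*} [Fintype V] [DecidableEq V]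
    (A : Finset (V × V)) (hT : IsTournament A) (h3 : woIndex A = 3) :
    ∃ ψ : V × V → Finset (Fin 2),
      (∀ e ∈ A, (ψ e).Nonempty) ∧
      (∀ v : V,
        ((outCut A v).Nonempty →
          ∃ i : Fin 2, Odd ((outCut A v).filter fun e => i ∈ ψ e).card) ∧
        ((inCut A v).Nonempty →
          ∃ i : Fin 2, Odd ((inCut A v).filter fun e => i ∈ ψ e).card)) ∧
      (A.filter fun e => (ψ e).card = 2).card ≤ 1 := by
  classical
  -- Step 1: no subset F of A is everywhere good (else a 2-coloring exists).
  have hno : ∀ F : Finset (V × V), F ⊆ A → (ZB A F).Nonempty := by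
    intro F hF
    rw [Finset.nonempty_iff_ne_empty]
    intro hempty
    have hgood : ∀ x : V × Bool, ¬ BadN A F x := by
      intro x hx
      have hx' : x ∈ ZB A F := by
        simp only [ZB, Finset.mem_filter, Finset.mem_univ, true_and]; exact hx
      rw [hempty] at hx'
      exact absurd hx' (Finset.notMem_empty x)
    set φ : V × V → ℕ := fun e => if e ∈ F then 1 else 0 with hφ
    have hsat : ∀ x : V × Bool, (cutN A x).Nonempty →
        ∃ i : ℕ, Odd ((cutN A x).filter fun e => φ e = i).card := by
      intro x hne
      have hcd := degp_add A F x
      by_cases hd : Odd (degp A F x)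
      · refine ⟨1, ?_⟩
        have heq : (cutN A x).filter (fun e => φ e = 1) = (cutN A x).filter (· ∈ F) := by
          apply Finset.filter_congr
          intro a _
          by_cases h : a ∈ F <;> simp [hφ, h]
        rw [heq]; exact hd
      · have hc : Odd (cutN A x).card := by
          by_contra hc
          exact hgood x ⟨hne, Nat.not_odd_iff_even.mp hc, Nat.not_odd_iff_even.mp hd⟩
        refine ⟨0, ?_⟩
        have heq : (cutN A x).filter (fun e => φ e = 0) = (cutN A x).filter (· ∉ F) := by
          apply Finset.filter_congr
          intro a _
          by_cases h : a ∈ F <;> simp [hφ, h]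
        rw [heq]
        rw [Nat.not_odd_iff_even, Nat.even_iff] at hd
        rw [Nat.odd_iff] at hc ⊢
        unfold degp at hcd hd
        omega
    have hco : IsWOColoring A 2 φ := by
      constructor
      · intro e _
        simp only [hφ]
        split <;> omega
      · intro v
        constructor
        · intro h
          have := hsat (v, false) (by rwa [cutN_false])
          rwa [cutN_false] at this
        · intro h
          have := hsat (v, true) (by rwa [cutN_true])
          rwa [cutN_true] at this
    have h2 : (2 : ℕ) ∈ {k | ∃ φ : V × V → ℕ, IsWOColoring A k φ} := ⟨φ, hco⟩
    have hle := Nat.sInf_le h2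
    unfold woIndex at h3
    omega
  -- Step 2: choose F minimizing the number of bad nodes.
  obtain ⟨F, hFmem, hmin⟩ := Finset.exists_min_image A.powerset
    (fun F => (ZB A F).card) ⟨A, Finset.mem_powerset_self A⟩
  rw [Finset.mem_powerset] at hFmem
  -- Step 3: toggling lemma.
  have key : ∀ x y : V × Bool, BadN A F x →
      ((cutN A y).Nonempty → Even (cutN A y).card → BadN A F y) →
      PairFix A x y → False := by
    intro x y hx hy hxy
    obtain ⟨hnexy, G, hGA, hpar⟩ := hxy
    have hF'A : F ∆ G ⊆ A := by
      intro a ha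
      rw [Finset.mem_symmDiff] at ha
      rcases ha with ⟨h, _⟩ | ⟨h, _⟩
      · exact hFmem h
      · exact hGA h
    have hparF' : ∀ w, Odd (degp A (F ∆ G) w) ↔
        ¬ (Odd (degp A F w) ↔ (w = x ∨ w = y)) := by
      intro w
      rw [odd_degp_symmDiff, hpar w]
    have hsub : ZB A (F ∆ G) ⊆ (ZB A F).erase x := by
      intro w hw
      simp only [ZB, Finset.mem_filter, Finset.mem_univ, true_and] at hw
      rw [Finset.mem_erase]
      by_cases hwx : w = x
      · exfalso
        subst hwx
        have h1 : Odd (degp A (F ∆ G) w) := by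
          rw [hparF' w]
          intro hiff
          exact (Nat.not_odd_iff_even.mpr hx.2.2) (hiff.mpr (Or.inl rfl))
        exact (Nat.not_odd_iff_even.mpr hw.2.2) h1
      · by_cases hwy : w = y
        · exfalso
          subst hwy
          have hbady : BadN A F w := hy hw.1 hw.2.1
          have h1 : Odd (degp A (F ∆ G) w) := by
            rw [hparF' w]
            intro hiff
            exact (Nat.not_odd_iff_even.mpr hbady.2.2) (hiff.mpr (Or.inr rfl))
          exact (Nat.not_odd_iff_even.mpr hw.2.2) h1
        · have hfalse : ¬ (w = x ∨ w = y) := by tauto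
          have hsame : ¬ Odd (degp A F w) := by
            intro hodd
            have h1 : Odd (degp A (F ∆ G) w) := by
              rw [hparF' w]
              intro hiff
              exact hfalse (hiff.mp hodd)
            exact (Nat.not_odd_iff_even.mpr hw.2.2) h1
          refine ⟨hwx, ?_⟩
          simp only [ZB, Finset.mem_filter, Finset.mem_univ, true_and]
          exact ⟨hw.1, hw.2.1, Nat.not_odd_iff_even.mp hsame⟩
    have hxZ : x ∈ ZB A F := by
      simp only [ZB, Finset.mem_filter, Finset.mem_univ, true_and]; exact hx
    have hcard : (ZB A (F ∆ G)).card < (ZB A F).card :=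
      lt_of_le_of_lt (Finset.card_le_card hsub) (Finset.card_erase_lt_of_mem hxZ)
    exact absurd (hmin (F ∆ G) (Finset.mem_powerset.mpr hF'A)) (not_le.mpr hcard)
  -- Step 4: z, connectivity class K.
  obtain ⟨z, hzZ⟩ := hno F hFmem
  have hz : BadN A F z := by
    simpa only [ZB, Finset.mem_filter, Finset.mem_univ, true_and] using hzZ
  set K : V × Bool → Prop := fun x => Relation.EqvGen (AdjN A) z x with hK
  have hKrefl : K z := Relation.EqvGen.refl z
  have closure : ∀ u w : V, (u, w) ∈ A → (K (u, false) ↔ K (w, true)) := by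
    intro u w huw
    have hadj : AdjN A (u, false) (w, true) := ⟨(u, w), huw, Or.inl ⟨rfl, rfl⟩⟩
    exact ⟨fun h => Relation.EqvGen.trans _ _ _ h (Relation.EqvGen.rel _ _ hadj),
      fun h => Relation.EqvGen.trans _ _ _ h
        (Relation.EqvGen.symm _ _ (Relation.EqvGen.rel _ _ hadj))⟩
  have hK_ne : ∀ x, K x → (cutN A x).Nonempty := by
    intro x hx
    rcases conn_nonisolated hx with h | ⟨_, y, hy⟩
    · rw [← h]; exact hz.1
    · exact adjN_nonempty hy
  have hK_even : ∀ x, K x → Even (cutN A x).card := by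
    intro x hx
    by_cases hxz : x = z
    · rw [hxz]; exact hz.2.1
    · by_contra hodd
      rcases conn_pairFix hx with h | hpf
      · exact hxz h.symm
      · exact key z x hz (fun _ hev => absurd hev hodd) hpf
  have hz_unique : ∀ x, BadN A F x → K x → x = z := by
    intro x hx hKx
    by_contra hne
    rcases conn_pairFix hKx with h | hpf
    · exact hne h.symm
    · exact key z x hz (fun _ _ => hx) hpf
  -- Step 5: geometry of the component.
  have hWsub : ∀ w w' : V, K (w, true) → ¬ K (w, false) →
      K (w', true) → ¬ K (w', false) → w = w' := by
    intro w w' h1 h2 h3' h4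
    by_contra hne
    rcases tournament_total hT hne with h | h
    · exact h2 ((closure w w' h).mpr h3')
    · exact h4 ((closure w' w h).mpr h1)
  have hUsub : ∀ u u' : V, K (u, false) → ¬ K (u, true) →
      K (u', false) → ¬ K (u', true) → u = u' := by
    intro u u' h1 h2 h3' h4
    by_contra hne
    rcases tournament_total hT hne with h | h
    · exact h4 ((closure u u' h).mp h1)
    · exact h2 ((closure u' u h).mp h3')
  have two_heads : ∀ p : V, (cutN A (p, false)).Nonempty → Even (cutN A (p, false)).card →
      ∃ w₁ w₂ : V, w₁ ≠ w₂ ∧ (p, w₁) ∈ A ∧ (p, w₂) ∈ A := by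
    intro p hne hev
    have h2 : 1 < (cutN A (p, false)).card := by
      have hpos := Finset.card_pos.mpr hne
      rw [Nat.even_iff] at hev
      omega
    rw [Finset.one_lt_card] at h2
    obtain ⟨e1, he1, e2, he2, hne12⟩ := h2
    rw [cutN_false] at he1 he2
    simp only [outCut, Finset.mem_filter] at he1 he2
    have he1' : e1 = (p, e1.2) := by rw [← he1.2]
    have he2' : e2 = (p, e2.2) := by rw [← he2.2]
    refine ⟨e1.2, e2.2, ?_, by rw [← he1']; exact he1.1, by rw [← he2']; exact he2.1⟩
    intro h
    apply hne12
    rw [he1', he2', h]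
  have two_tails : ∀ p : V, (cutN A (p, true)).Nonempty → Even (cutN A (p, true)).card →
      ∃ w₁ w₂ : V, w₁ ≠ w₂ ∧ (w₁, p) ∈ A ∧ (w₂, p) ∈ A := by
    intro p hne hev
    have h2 : 1 < (cutN A (p, true)).card := by
      have hpos := Finset.card_pos.mpr hne
      rw [Nat.even_iff] at hev
      omega
    rw [Finset.one_lt_card] at h2
    obtain ⟨e1, he1, e2, he2, hne12⟩ := h2
    rw [cutN_true] at he1 he2
    simp only [inCut, Finset.mem_filter] at he1 he2
    have he1' : e1 = (e1.1, p) := by rw [← he1.2]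
    have he2' : e2 = (e2.1, p) := by rw [← he2.2]
    refine ⟨e1.1, e2.1, ?_, by rw [← he1']; exact he1.1, by rw [← he2']; exact he2.1⟩
    intro h
    apply hne12
    rw [he1', he2', h]
  have hI : ∃ v : V, K (v, false) ∧ K (v, true) := by
    cases hb : z.2 with
    | false =>
      have hzc : (z.1, false) = z := by rw [← hb]
      obtain ⟨w₁, w₂, hw12, ha1, ha2⟩ :=
        two_heads z.1 (by rw [hzc]; exact hz.1) (by rw [hzc]; exact hz.2.1)
      have hzf : K (z.1, false) := by rw [hzc]; exact hKrefl
      have hw₁W : K (w₁, true) := (closure _ _ ha1).mp hzf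
      have hw₂W : K (w₂, true) := (closure _ _ ha2).mp hzf
      by_cases h1 : K (w₁, false)
      · exact ⟨w₁, h1, hw₁W⟩
      by_cases h2 : K (w₂, false)
      · exact ⟨w₂, h2, hw₂W⟩
      exact absurd (hWsub w₁ w₂ hw₁W h1 hw₂W h2) hw12
    | true =>
      have hzc : (z.1, true) = z := by rw [← hb]
      obtain ⟨w₁, w₂, hw12, ha1, ha2⟩ :=
        two_tails z.1 (by rw [hzc]; exact hz.1) (by rw [hzc]; exact hz.2.1)
      have hzt : K (z.1, true) := by rw [hzc]; exact hKrefl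
      have hw₁U : K (w₁, false) := (closure _ _ ha1).mpr hzt
      have hw₂U : K (w₂, false) := (closure _ _ ha2).mpr hzt
      by_cases h1 : K (w₁, true)
      · exact ⟨w₁, hw₁U, h1⟩
      by_cases h2 : K (w₂, true)
      · exact ⟨w₂, hw₂U, h2⟩
      exact absurd (hUsub w₁ w₂ hw₁U h1 hw₂U h2) hw12
  have hUnion : ∀ q : V, K (q, false) ∨ K (q, true) := by
    obtain ⟨u₀, hu₀f, hu₀t⟩ := hI
    intro q
    by_cases hq : q = u₀
    · subst hq; exact Or.inl hu₀f
    rcases tournament_total hT hq with h | h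
    · exact Or.inl ((closure q u₀ h).mpr hu₀t)
    · exact Or.inr ((closure u₀ q h).mp hu₀f)
  have hBadK : ∀ x, BadN A F x → K x := by
    intro x hx
    by_contra hKx
    cases hb : x.2 with
    | false =>
      have hxc : (x.1, false) = x := by rw [← hb]
      obtain ⟨w₁, w₂, hw12, ha1, ha2⟩ :=
        two_heads x.1 (by rw [hxc]; exact hx.1) (by rw [hxc]; exact hx.2.1)
      have hnW : ∀ w, (x.1, w) ∈ A → ¬ K (w, true) := by
        intro w hw hKw
        apply hKx
        rw [← hxc]
        exact (closure x.1 w hw).mpr hKw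
      have h1 : K (w₁, false) := (hUnion w₁).resolve_right (hnW w₁ ha1)
      have h2 : K (w₂, false) := (hUnion w₂).resolve_right (hnW w₂ ha2)
      exact hw12 (hUsub w₁ w₂ h1 (hnW w₁ ha1) h2 (hnW w₂ ha2))
    | true =>
      have hxc : (x.1, true) = x := by rw [← hb]
      obtain ⟨w₁, w₂, hw12, ha1, ha2⟩ :=
        two_tails x.1 (by rw [hxc]; exact hx.1) (by rw [hxc]; exact hx.2.1)
      have hnU : ∀ w, (w, x.1) ∈ A → ¬ K (w, false) := by
        intro w hw hKw
        apply hKx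
        rw [← hxc]
        exact (closure w x.1 hw).mp hKw
      have h1 : K (w₁, true) := (hUnion w₁).resolve_left (hnU w₁ ha1)
      have h2 : K (w₂, true) := (hUnion w₂).resolve_left (hnU w₂ ha2)
      exact hw12 (hWsub w₁ w₂ h1 (hnU w₁ ha1) h2 (hnU w₂ ha2))
  have hz_only : ∀ x, BadN A F x → x = z := fun x hx => hz_unique x hx (hBadK x hx)
  -- Step 6: the covering.
  obtain ⟨e₀, he₀⟩ := hz.1
  have he₀A : e₀ ∈ A := cutN_subset A z he₀
  set ψ : V × V → Finset (Fin 2) :=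
    fun e => if e = e₀ then {0, 1} else if e ∈ F then {1} else {0} with hψ
  have mem1 : ∀ e, (1 : Fin 2) ∈ ψ e ↔ (e = e₀ ∨ e ∈ F) := by
    intro e
    by_cases h : e = e₀
    · simp [hψ, h]
    · by_cases h' : e ∈ F <;> simp [hψ, h, h']
  have mem0 : ∀ e, (0 : Fin 2) ∈ ψ e ↔ (e = e₀ ∨ e ∉ F) := by
    intro e
    by_cases h : e = e₀
    · simp [hψ, h]
    · by_cases h' : e ∈ F <;> simp [hψ, h, h']
  have main : ∀ x : V × Bool, (cutN A x).Nonempty →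
      ∃ i : Fin 2, Odd ((cutN A x).filter fun e => i ∈ ψ e).card := by
    intro x hne
    by_cases hxz : x = z
    · subst hxz
      by_cases hF0 : e₀ ∈ F
      · refine ⟨0, ?_⟩
        have heq : (cutN A x).filter (fun e => (0 : Fin 2) ∈ ψ e) =
            insert e₀ ((cutN A x).filter (· ∉ F)) := by
          ext a
          simp only [Finset.mem_insert, Finset.mem_filter, mem0]
          constructor
          · rintro ⟨ha, h | h⟩
            · exact Or.inl h
            · exact Or.inr ⟨ha, h⟩
          · rintro (h | ⟨ha, h⟩)
            · subst h; exact ⟨he₀, Or.inl rfl⟩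
            · exact ⟨ha, Or.inr h⟩
        rw [heq, Finset.card_insert_of_notMem (by simp [hF0])]
        have hd := degp_add A F x
        have h1 := hz.2.1
        have h2 := hz.2.2
        rw [Nat.even_iff] at h1 h2
        rw [Nat.odd_iff]
        unfold degp at hd h2
        omega
      · refine ⟨1, ?_⟩
        have heq : (cutN A x).filter (fun e => (1 : Fin 2) ∈ ψ e) =
            insert e₀ ((cutN A x).filter (· ∈ F)) := by
          ext a
          simp only [Finset.mem_insert, Finset.mem_filter, mem1]
          constructor
          · rintro ⟨ha, h | h⟩
            · exact Or.inl h
            · exact Or.inr ⟨ha, h⟩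
          · rintro (h | ⟨ha, h⟩)
            · subst h; exact ⟨he₀, Or.inl rfl⟩
            · exact ⟨ha, Or.inr h⟩
        rw [heq, Finset.card_insert_of_notMem (by simp [hF0])]
        have h2 := hz.2.2
        rw [Nat.even_iff] at h2
        rw [Nat.odd_iff]
        unfold degp at h2
        omega
    · have hgoodx : ¬ BadN A F x := fun h => hxz (hz_only x h)
      by_cases he₀x : e₀ ∈ cutN A x
      · have hadj : AdjN A z x := by
          rcases (mem_cutN he₀A z).mp he₀ with h | h <;>
            rcases (mem_cutN he₀A x).mp he₀x with h' | h'
          · exact absurd (h'.trans h.symm) hxz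
          · exact ⟨e₀, he₀A, Or.inl ⟨h, h'⟩⟩
          · exact ⟨e₀, he₀A, Or.inr ⟨h, h'⟩⟩
          · exact absurd (h'.trans h.symm) hxz
        have hKx : K x := Relation.EqvGen.rel z x hadj
        have hev : Even (cutN A x).card := hK_even x hKx
        have hoddd : Odd (degp A F x) := by
          by_contra ho
          exact hgoodx ⟨hne, hev, Nat.not_odd_iff_even.mp ho⟩
        by_cases hF0 : e₀ ∈ F
        · refine ⟨1, ?_⟩
          have heq : (cutN A x).filter (fun e => (1 : Fin 2) ∈ ψ e) =
              (cutN A x).filter (· ∈ F) := by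
            apply Finset.filter_congr
            intro a _
            rw [mem1]
            constructor
            · rintro (h | h)
              · rw [h]; exact hF0
              · exact h
            · exact Or.inr
          rw [heq]
          exact hoddd
        · refine ⟨0, ?_⟩
          have heq : (cutN A x).filter (fun e => (0 : Fin 2) ∈ ψ e) =
              (cutN A x).filter (· ∉ F) := by
            apply Finset.filter_congr
            intro a _
            rw [mem0]
            constructor
            · rintro (h | h)
              · rw [h]; exact hF0
              · exact h
            · exact Or.inr
          rw [heq]
          have hd := degp_add A F x
          rw [Nat.odd_iff] at hoddd ⊢
          rw [Nat.even_iff] at hev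
          omega
      · have h1 : (cutN A x).filter (fun e => (1 : Fin 2) ∈ ψ e) =
            (cutN A x).filter (· ∈ F) := by
          apply Finset.filter_congr
          intro a ha
          rw [mem1]
          have hae : a ≠ e₀ := fun h => he₀x (h ▸ ha)
          tauto
        have h0 : (cutN A x).filter (fun e => (0 : Fin 2) ∈ ψ e) =
            (cutN A x).filter (· ∉ F) := by
          apply Finset.filter_congr
          intro a ha
          rw [mem0]
          have hae : a ≠ e₀ := fun h => he₀x (h ▸ ha)
          tauto
        by_cases hodd : Odd (degp A F x)
        · exact ⟨1, by rw [h1]; exact hodd⟩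
        · have hoc : Odd (cutN A x).card := by
            by_contra hoc
            exact hgoodx ⟨hne, Nat.not_odd_iff_even.mp hoc, Nat.not_odd_iff_even.mp hodd⟩
          refine ⟨0, ?_⟩
          rw [h0]
          have hd := degp_add A F x
          rw [Nat.odd_iff] at hoc ⊢
          rw [Nat.not_odd_iff_even, Nat.even_iff] at hodd
          unfold degp at hd hodd
          omega
  refine ⟨ψ, ?_, ?_, ?_⟩
  · intro e _
    simp only [hψ]
    split
    · exact ⟨0, by simp⟩
    · split
      · exact ⟨1, by simp⟩
      · exact ⟨0, by simp⟩
  · intro v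
    constructor
    · intro h
      have := main (v, false) (by rwa [cutN_false])
      rwa [cutN_false] at this
    · intro h
      have := main (v, true) (by rwa [cutN_true])
      rwa [cutN_true] at this
  · have hsub : A.filter (fun e => (ψ e).card = 2) ⊆ {e₀} := by
      intro e he
      rw [Finset.mem_filter] at he
      rw [Finset.mem_singleton]
      by_contra hne
      have h2 := he.2
      simp only [hψ, if_neg hne] at h2
      split at h2 <;> simp at h2
    calc (A.filter fun e => (ψ e).card = 2).card ≤ ({e₀} : Finset (V × V)).card :=
          Finset.card_le_card hsub
      _ = 1 := Finset.card_singleton e₀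
end
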